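/- arXiv:math/9301205 — 8 statements merged into one kernel-verified Lean document; each statement's English description precedes it below -/
import Mathlib

section
/- Let η be the linear order consisting of all functions f : ω → ω₁ with finite support (i.e., {n : f(n) ≠ 0} is finite), ordered by f < g iff f(n) < g(n) at the least n where f and g differ. For every ordinal α < ω₁, the suborder η^{≥α} = {f ∈ η : f(0) ≥ α} is order-isomorphic to η. -/
/-!
Since `ω₁` is additively principal, `x ↦ α + x` is an order isomorphism from `ω₁` onto
`[α, ω₁)`. Applying an order isomorphism in a single coordinate of a finitely supported function
and leaving the others untouched preserves the lexicographic order, so doing this in coordinate `0`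
carries `η` onto `η^{≥α}`.
-/

open Cardinal

noncomputable section

/-- ω₁ as an ordinal. -/
abbrev om1 : Ordinal := (Cardinal.aleph 1).ord

/-- The countable ordinals, i.e. ordinals `< ω₁`, as a linearly ordered type. -/
abbrev O1 : Type 1 := {o : Ordinal // o < om1}

instance : Zero O1 := ⟨⟨0, by rw [Cardinal.lt_ord]; simpa using Cardinal.aleph_pos 1⟩⟩

/-- η : the finitely supported functions ω → ω₁, ordered lexicographically:
`f < g` iff `f n < g n` at the least `n` where `f` and `g` differ. -/
abbrev Eta : Type 1 := Lex (ℕ →₀ O1)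

namespace Finsupp

variable {ι M : Type*} [LinearOrder ι] [Zero M]

theorem Lex.strictMono_update_apply [PartialOrder M] (i : ι) {φ : M → M} (hφ : StrictMono φ) :
    StrictMono fun f : Lex (ι →₀ M) ↦ toLex ((ofLex f).update i (φ (ofLex f i))) := by
  classical
  intro f g hfg
  obtain ⟨j, hfg_eq, hfg_lt⟩ := Lex.lt_iff.1 hfg
  refine Lex.lt_iff.2 ⟨j, fun k hk ↦ ?_, ?_⟩ <;> simp only [ofLex_toLex, update_apply]
  · split_ifs with hki
    · rw [hfg_eq i (hki ▸ hk)]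
    · exact hfg_eq k hk
  · split_ifs with hji
    · exact hji ▸ hφ hfg_lt
    · exact hfg_lt

def Lex.subtypeApplyOrderIso [LinearOrder M] (i : ι) {p : M → Prop} (e : M ≃o {y // p y}) :
    {f : Lex (ι →₀ M) // p (ofLex f i)} ≃o Lex (ι →₀ M) :=
  OrderIso.symm <| StrictMono.orderIsoOfSurjective
    (fun f ↦ ⟨toLex ((ofLex f).update i (e (ofLex f i))), by classical simpa using (e _).2⟩)
    (fun _ _ h ↦ Lex.strictMono_update_apply i (Subtype.strictMono_coe _ |>.comp e.strictMono) h)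
    (fun f ↦ ⟨toLex ((ofLex f.1).update i (e.symm ⟨_, f.2⟩)), Subtype.ext <| by simp⟩)

end Finsupp

namespace Ordinal

def addLeftOrderIso {o : Ordinal} (ho : IsPrincipal (· + ·) o) {α : Ordinal} (hα : α < o) :
    {x : Ordinal // x < o} ≃o {y : {x : Ordinal // x < o} // α ≤ y.1} :=
  StrictMono.orderIsoOfSurjective (fun x ↦ ⟨⟨α + x.1, ho hα x.2⟩, le_self_add⟩)
    (fun _ _ h ↦ (add_lt_add_iff_left α).2 h)
    (fun y ↦ ⟨⟨y.1.1 - α, (sub_le_self _ _).trans_lt y.1.2⟩,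
      Subtype.ext <| Subtype.ext <| Ordinal.add_sub_cancel_of_le y.2⟩)

end Ordinal

/-- For every ordinal `α < ω₁`, the suborder `η^{≥α} = {f ∈ η : f 0 ≥ α}` is
order-isomorphic to `η`. -/
theorem eta_ge_orderIso (α : Ordinal) (hα : α < om1) :
    Nonempty ({f : Eta // α ≤ ((ofLex f) 0 : O1).1} ≃o Eta) :=
  ⟨Finsupp.Lex.subtypeApplyOrderIso 0
    (Ordinal.addLeftOrderIso (Ordinal.isPrincipal_add_ord (aleph0_le_aleph 1)) hα)⟩
end
end

section
/- Let η be the linear order of finitely supported functions ω → ω₁ ordered lexicographically (f < g iff f(n) < g(n) at the least point of difference). For every natural number n ≥ 1, the lexicographic product η × n (n consecutive copies of η) is order-isomorphic to η. -/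
open Cardinal

noncomputable section

/-!
Splitting off the first coordinate gives `η ≃o ω₁ ×ₗ η`. Since `1 + ω₁ = ω₁`, this yields
`η ⊕ₗ η ≃o (1 ⊕ₗ ω₁) ×ₗ η ≃o ω₁ ×ₗ η ≃o η`, and any linear order absorbing a second copy of
itself absorbs `n` copies, by induction on `n`.
-/

namespace Ordinal

def withBotLtOrderIso {o : Ordinal} (ho : ω ≤ o) :
    WithBot {a : Ordinal // a < o} ≃o {a : Ordinal // a < o} :=
  StrictMono.orderIsoOfSurjective
    (WithBot.recBotCoe ⟨0, omega0_pos.trans_le ho⟩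
      fun a => ⟨1 + a.1, calc 1 + a.1 < 1 + o := (add_lt_add_iff_left 1).mpr a.2
        _ = o := one_add_of_omega0_le ho⟩)
    (by
      rintro (_ | ⟨a⟩) (_ | ⟨b⟩) h
      · exact absurd h (lt_irrefl _)
      · exact Subtype.mk_lt_mk.mpr (zero_lt_one.trans_le le_self_add)
      · exact absurd h not_lt_bot
      · exact Subtype.mk_lt_mk.mpr
          ((add_lt_add_iff_left 1).mpr (WithBot.coe_lt_coe (a := a) (b := b) |>.mp h)))
    (by
      rintro ⟨b, hb⟩
      rcases eq_zero_or_pos b with rfl | hb0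
      · exact ⟨⊥, rfl⟩
      · exact ⟨↑(⟨b - 1, (sub_le_self b 1).trans_lt hb⟩ : {a : Ordinal // a < o}),
          Subtype.ext (Ordinal.add_sub_cancel_of_le (Order.one_le_iff_ne_zero.mpr hb0.ne'))⟩)

end Ordinal

namespace Finsupp

variable {M : Type*} [Zero M] [LinearOrder M]

def Lex.headTailOrderIso : Lex (ℕ →₀ M) ≃o M ×ₗ Lex (ℕ →₀ M) :=
  StrictMono.orderIsoOfSurjective
    (fun f => toLex (ofLex f 0,
      toLex ((ofLex f).comapDomain (· + 1) (add_left_injective 1).injOn)))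
    (by
      intro f g h
      obtain ⟨j, hj, hlt⟩ := Finsupp.Lex.lt_iff.mp h
      rcases j with _ | k
      · exact Prod.Lex.toLex_lt_toLex.mpr (Or.inl hlt)
      · refine Prod.Lex.toLex_lt_toLex.mpr (Or.inr ⟨hj 0 k.succ_pos, ?_⟩)
        exact Finsupp.Lex.lt_iff.mpr ⟨k, fun d hd => hj (d + 1) (by omega), hlt⟩)
    (by
      rintro ⟨a, g⟩
      refine ⟨toLex (((ofLex g).embDomain ⟨(· + 1), add_left_injective 1⟩).update 0 a), ?_⟩
      refine congrArg toLex (Prod.ext ?_ (congrArg toLex (Finsupp.ext fun n => ?_)))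
      · simp
      · rw [ofLex_toLex, comapDomain_apply, update_apply, if_neg n.succ_ne_zero]
        exact embDomain_apply_self (⟨(· + 1), add_left_injective 1⟩ : ℕ ↪ ℕ) (ofLex g) n)

def Lex.sumLexSelfOrderIso (e : WithBot M ≃o M) :
    Lex (ℕ →₀ M) ⊕ₗ Lex (ℕ →₀ M) ≃o Lex (ℕ →₀ M) :=
  (OrderIso.sumLexCongr (Prod.Lex.uniqueProd Unit _).symm headTailOrderIso).trans <|
    (Prod.Lex.sumLexProdLexDistrib _ _ _).symm.trans <|
      (Prod.Lex.prodLexCongr (WithBot.orderIsoPUnitSumLex.symm.trans e) (.refl _)).trans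
        headTailOrderIso.symm

end Finsupp

def OrderIso.finSuccProdLexOfSumLexSelf {α : Type*} [LinearOrder α] (e : α ⊕ₗ α ≃o α) :
    ∀ n : ℕ, Fin (n + 1) ×ₗ α ≃o α
  | 0 => Prod.Lex.uniqueProd (Fin 1) α
  | n + 1 =>
    (Prod.Lex.prodLexCongr
      (Fintype.orderIsoFinOfCardEq (Unit ⊕ₗ Fin (n + 1)) (by simp [add_comm])) (.refl α)).trans <|
      (Prod.Lex.sumLexProdLexDistrib _ _ _).trans <|
        (OrderIso.sumLexCongr (Prod.Lex.uniqueProd _ _) (finSuccProdLexOfSumLexSelf e n)).trans e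

/-- For every `n ≥ 1`, the lexicographic product `η × n` (n consecutive copies of η,
ordered first by the index in `Fin n`, then inside the copies) is order-isomorphic to `η`. -/
theorem eta_mul_nat_orderIso (n : ℕ) (hn : 1 ≤ n) :
    Nonempty (Lex (Fin n × Eta) ≃o Eta) := by
  obtain ⟨m, rfl⟩ := Nat.exists_eq_add_of_le' hn
  have hω₁ : Ordinal.omega0 ≤ om1 := omega0_le_ord.mpr (aleph0_le_aleph 1)
  exact ⟨OrderIso.finSuccProdLexOfSumLexSelf
    (Finsupp.Lex.sumLexSelfOrderIso (Ordinal.withBotLtOrderIso hω₁)) m⟩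
end
end

section
/- Let the linear order ℒ = η + η × ω₁* where η is the lexicographic order of finitely supported functions ω → ω₁ and ω₁* is ω₁ reversed. Then ℒ contains a strictly decreasing sequence of length ω₁, but for every α < ω₁ the order η + η × α* contains no strictly decreasing sequence of length ω₁. -/
open Cardinal

noncomputable section

/-!
A strictly decreasing ω₁-sequence in a lexicographic sum ends up, after an initial segment, in a
single summand; in a lexicographic product `C ×ₗ L` with `C` countable its first coordinate is an
antitone map from ω₁ into a countable order, hence eventually constant by the regularity of ω₁,
so its tail lives in a single copy of `L`. Thus it suffices that η has no such sequence: for each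
`n` the first `n` coordinates form an antitone map into the well-order `ω₁ⁿ` (lexicographic),
which is eventually constant, and beyond a common bound of these countably many stabilisation
points the sequence would be constant. In `η + η × ω₁*`, on the other hand, `β ↦ (β, 0)` in the
second summand is strictly decreasing.
-/

lemma om1_eq_omega_one : om1 = Ordinal.omega 1 := ord_aleph 1

lemma countable_of_lt_om1 {α : Ordinal} (hα : α < om1) : Countable {o : Ordinal // o < α} := by
  rw [← Cardinal.mk_le_aleph0_iff]
  show #(Set.Iio α) ≤ ℵ₀
  rw [Cardinal.mk_Iio_ordinal, lift_le_aleph0, ← lt_aleph_one_iff]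
  exact lt_ord.mp hα

lemma Antitone.exists_forall_ge_eq_of_wellFoundedLT {α β : Type*} [Preorder α] [Nonempty α]
    [LinearOrder β] [WellFoundedLT β] {f : α → β} (hf : Antitone f) :
    ∃ T, ∀ x, T ≤ x → f x = f T := by
  obtain ⟨_, ⟨T, rfl⟩, hmin⟩ := wellFounded_lt.has_min (Set.range f) (Set.range_nonempty f)
  exact ⟨T, fun x hx => le_antisymm (hf hx) (not_lt.mp (hmin _ (Set.mem_range_self x)))⟩

namespace O1

lemma exists_upperBound_of_countable {ι : Type*} [Countable ι] (f : ι → O1) :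
    ∃ T : O1, ∀ i, f i ≤ T :=
  have hsup : ⨆ i, (f i).1 < Ordinal.omega 1 :=
    Ordinal.iSup_lt_omega_one fun i => (f i).2.trans_eq om1_eq_omega_one
  ⟨⟨_, hsup.trans_eq om1_eq_omega_one.symm⟩, fun i => Ordinal.le_iSup (fun i => (f i).1) i⟩

instance : NoMaxOrder O1 :=
  (isSuccLimit_ord (aleph0_le_aleph 1)).isSuccPrelimit.noMaxOrder_Iio

def shift (T β : O1) : O1 :=
  ⟨T.1 + β.1, Ordinal.isPrincipal_add_ord (aleph0_le_aleph 1) T.2 β.2⟩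

lemma le_shift (T β : O1) : T ≤ shift T β := le_self_add (a := T.1) (b := β.1)

lemma shift_strictMono (T : O1) : StrictMono (shift T) := fun _ _ h =>
  (add_lt_add_iff_left T.1).mpr h

lemma exists_forall_ge_eq_of_antitone {C : Type*} [LinearOrder C] [Countable C]
    {f : O1 → C} (hf : Antitone f) : ∃ T, ∀ β, T ≤ β → f β = f T := by
  -- Some value is taken cofinally: otherwise a common bound of the countably many points beyond
  -- which each value is omitted would be sent to an omitted value.
  obtain ⟨c, hc⟩ : ∃ c, ∀ T : O1, ∃ β, T ≤ β ∧ f β = c := by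
    by_contra! h
    choose T hT using h
    obtain ⟨B, hB⟩ := exists_upperBound_of_countable T
    exact hT (f B) B (hB _) rfl
  obtain ⟨T, -, hT⟩ := hc 0
  refine ⟨T, fun β hβ => le_antisymm (hT ▸ hf hβ) ?_⟩
  obtain ⟨β', hβ', hβ'c⟩ := hc β
  exact hT ▸ hβ'c ▸ hf hβ'

end O1

section Truncation

variable {W : Type*} [Zero W]

def truncLex (n : ℕ) (f : Lex (ℕ →₀ W)) : Lex (Fin n → W) := toLex fun i => ofLex f i

lemma truncLex_monotone [PartialOrder W] (n : ℕ) : Monotone (truncLex (W := W) n) := by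
  intro f g hfg
  rcases hfg.lt_or_eq with hlt | rfl
  · obtain ⟨i, hagree, hi⟩ := Finsupp.Lex.lt_iff.mp hlt
    by_cases hin : i < n
    · exact le_of_lt ⟨⟨i, hin⟩, fun j hj => hagree j hj, hi⟩
    · exact le_of_eq <| congrArg toLex <| funext fun j => hagree j (j.2.trans_le (not_lt.mp hin))
  · exact le_rfl

end Truncation

def NoOmega1DescendingSeq (L : Type*) [Preorder L] : Prop := ∀ s : O1 → L, ¬ StrictAnti s

namespace NoOmega1DescendingSeq

variable {L : Type*} [LinearOrder L]

lemma not_strictAnti_of_eventually_mem_range {M : Type*} [Preorder M]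
    (hL : NoOmega1DescendingSeq L) {e : L → M} (he : StrictMono e) {s : O1 → M} (T : O1)
    (hT : ∀ β, T ≤ β → s β ∈ Set.range e) : ¬ StrictAnti s := by
  intro hs
  choose u hu using fun β => hT (O1.shift T β) (O1.le_shift T β)
  refine hL u fun β β' hββ' => he.lt_iff_lt.mp ?_
  rw [hu, hu]
  exact hs (O1.shift_strictMono T hββ')

lemma sumLex {M : Type*} [LinearOrder M] (hL : NoOmega1DescendingSeq L)
    (hM : NoOmega1DescendingSeq M) : NoOmega1DescendingSeq (Lex (L ⊕ M)) := by
  intro s hs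
  by_cases hleft : ∃ T x, s T = toLex (Sum.inl x)
  · obtain ⟨T, x, hTx⟩ := hleft
    refine hL.not_strictAnti_of_eventually_mem_range Sum.Lex.inl_strictMono T
      (fun β hβ => ?_) hs
    have hle : s β ≤ toLex (Sum.inl x) := hTx ▸ hs.antitone hβ
    rcases hsβ : s β with y | y
    · exact ⟨y, rfl⟩
    · exact absurd (hsβ ▸ hle) Sum.Lex.not_inr_le_inl
  · push Not at hleft
    refine hM.not_strictAnti_of_eventually_mem_range Sum.Lex.inr_strictMono 0
      (fun β _ => ?_) hs
    rcases hsβ : s β with y | y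
    · exact absurd hsβ (hleft β y)
    · exact ⟨y, rfl⟩

lemma prodLex {C : Type*} [LinearOrder C] [Countable C] (hL : NoOmega1DescendingSeq L) :
    NoOmega1DescendingSeq (Lex (C × L)) := by
  intro s hs
  obtain ⟨T, hT⟩ :=
    O1.exists_forall_ge_eq_of_antitone (Prod.Lex.monotone_fst_ofLex.comp_antitone hs.antitone)
  have he : StrictMono fun x : L => toLex ((ofLex (s T)).1, x) := fun _ _ h =>
    Prod.Lex.toLex_lt_toLex.mpr (Or.inr ⟨rfl, h⟩)
  refine hL.not_strictAnti_of_eventually_mem_range he T (fun β hβ => ⟨(ofLex (s β)).2, ?_⟩) hs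
  rw [← show (ofLex (s β)).1 = (ofLex (s T)).1 from hT β hβ]
  rfl

lemma finsuppLex {W : Type*} [Zero W] [LinearOrder W] [WellFoundedLT W] :
    NoOmega1DescendingSeq (Lex (ℕ →₀ W)) := by
  intro s hs
  choose T hT using fun n =>
    ((truncLex_monotone n).comp_antitone hs.antitone).exists_forall_ge_eq_of_wellFoundedLT
  obtain ⟨B, hB⟩ := O1.exists_upperBound_of_countable T
  obtain ⟨B', hBB'⟩ := exists_gt B
  have hcoord (k : ℕ) {β : O1} (hβ : B ≤ β) : ofLex (s β) k = ofLex (s (T (k + 1))) k :=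
    congrFun (congrArg ofLex (hT (k + 1) β ((hB _).trans hβ))) ⟨k, k.lt_succ_self⟩
  have hsame : ofLex (s B') = ofLex (s B) :=
    Finsupp.ext fun k => (hcoord k hBB'.le).trans (hcoord k le_rfl).symm
  exact (hs hBB').ne hsame

end NoOmega1DescendingSeq

/-- The order `ℒ = η + η × ω₁*` contains a strictly decreasing sequence of length ω₁,
but for every `α < ω₁`, the order `η + η × α*` contains no strictly decreasing
sequence of length ω₁. -/
theorem eta_add_eta_mul_omega1_rev_descending :
    (∃ s : O1 → Lex (Eta ⊕ Lex (O1ᵒᵈ × Eta)), StrictAnti s) ∧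
    (∀ α : Ordinal, α < om1 →
      ∀ s : O1 → Lex (Eta ⊕ Lex (({o : Ordinal // o < α})ᵒᵈ × Eta)), ¬ StrictAnti s) := by
  refine ⟨⟨fun β => toLex (Sum.inr (toLex (OrderDual.toDual β, 0))), fun β β' h =>
    Sum.Lex.inr_lt_inr_iff.mpr (Prod.Lex.toLex_lt_toLex.mpr (Or.inl h))⟩, fun α hα => ?_⟩
  have : Countable ({o : Ordinal // o < α})ᵒᵈ := countable_of_lt_om1 hα
  exact NoOmega1DescendingSeq.finsuppLex.sumLex NoOmega1DescendingSeq.finsuppLex.prodLex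
end
end

section
/- Assume there exists an ω₂-complete normal ideal I on ω₂ containing all singletons such that I⁺ has a dense subset K closed under lower bounds of descending chains of length < ω₁ (the hypothesis I(ω)). Then the continuum hypothesis 2^ω = ω₁ holds. -/
open Cardinal

noncomputable section

/-- ω₂ as an ordinal. -/
abbrev om2 : Ordinal := (Cardinal.aleph 2).ord

/-- The ordinals below ω₂, as a linearly ordered type. -/
abbrev O2 : Type 1 := {o : Ordinal // o < om2}

/-!
Suppose `2 ^ ℵ₀ ≥ ℵ₂` and fix an injection `t` of ω₂ into `ℕ → Bool`, i.e. into the branches of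
the full binary tree of height ω. As `I` is closed under binary unions, every `I`-positive set has
a positive subset on which the `n`-th bit of `t` is constant. Refining inside `K` one bit at a
time yields a descending ω-chain in `K`, whose lower bound `Z ∈ K` is contained in a single
branch. So `Z` has at most one point and lies in `I`, contradicting `Z ∈ K ⊆ I⁺`.
-/

open scoped Ordinal

theorem Cardinal.eq_aleph_one_of_lt_aleph_two {c : Cardinal} (h₁ : ℵ₁ ≤ c) (h₂ : c < ℵ_ 2) :
    c = ℵ₁ := by
  have hsucc : ℵ_ 2 = Order.succ ℵ₁ := by
    rw [Cardinal.succ_aleph, one_add_one_eq_two]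
  exact le_antisymm (Order.lt_succ_iff.mp (hsucc ▸ h₂)) h₁

theorem nonempty_embedding_O2_of_aleph_two_le (h : ℵ_ 2 ≤ (2 : Cardinal.{0}) ^ ℵ₀) :
    Nonempty (O2 ↪ (ℕ → Bool)) := by
  rw [← Cardinal.lift_mk_le']
  have hO2 : #O2 = lift.{1} (ℵ_ 2 : Cardinal.{0}) := by
    rw [show #O2 = #(Set.Iio om2) from rfl, Cardinal.mk_Iio_ordinal, Cardinal.card_ord]
  rw [hO2, ← Cardinal.power_def, Cardinal.mk_bool, Cardinal.mk_nat, Cardinal.lift_lift]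
  exact Cardinal.lift_le.mpr h

instance : Nonempty O2 :=
  ⟨⟨0, Cardinal.ord_pos.mpr (Cardinal.aleph_pos 2)⟩⟩

section IdealOfSets

variable {α : Type*} {I : Set (Set α)}

theorem union_mem_of_sUnion_mem {κ : Cardinal} (hκ : 2 < κ)
    (hcomplete : ∀ S : Set (Set α), S ⊆ I → #S < κ → ⋃₀ S ∈ I) {A B : Set α}
    (hA : A ∈ I) (hB : B ∈ I) : A ∪ B ∈ I := by
  have hcard : #({A, B} : Set (Set α)) < κ :=
    (Cardinal.mk_insert_le.trans (by simp [one_add_one_eq_two])).trans_lt hκ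
  simpa using hcomplete {A, B} (by simp [Set.insert_subset_iff, hA, hB]) hcard

theorem subsingleton_mem_of_singleton_mem [Nonempty α]
    (hdown : ∀ Y Z : Set α, Y ⊆ Z → Z ∈ I → Y ∈ I) (hsing : ∀ x : α, ({x} : Set α) ∈ I)
    {s : Set α} (hs : s.Subsingleton) : s ∈ I := by
  obtain rfl | ⟨x, rfl⟩ := hs.eq_empty_or_singleton
  · exact hdown ∅ _ (Set.empty_subset _) (hsing (Classical.arbitrary α))
  · exact hsing x

theorem exists_fiber_not_mem (hdown : ∀ Y Z : Set α, Y ⊆ Z → Z ∈ I → Y ∈ I)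
    (hunion : ∀ A B : Set α, A ∈ I → B ∈ I → A ∪ B ∈ I) (f : α → Bool) {Y : Set α}
    (hY : Y ∉ I) : ∃ b : Bool, {a ∈ Y | f a = b} ∉ I := by
  by_contra! h
  refine hY (hdown _ _ (fun a ha => ?_) (hunion _ _ (h false) (h true)))
  cases hb : f a
  exacts [Or.inl ⟨ha, hb⟩, Or.inr ⟨ha, hb⟩]

end IdealOfSets

theorem exists_lowerBound_of_antitone_nat {α : Type*} {K : Set (Set α)}
    (hKchain : ∀ c : {o : Ordinal // o < ω} → Set α, (∀ i, c i ∈ K) →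
      (∀ i j, i ≤ j → c j ⊆ c i) → ∃ Y ∈ K, ∀ i, Y ⊆ c i)
    {c : ℕ → Set α} (hcK : ∀ n, c n ∈ K) (hc : Antitone c) : ∃ Y ∈ K, ∀ n, Y ⊆ c n := by
  -- ordinals below `ω` are natural numbers, read off by `toNat ∘ card`
  obtain ⟨Y, hYK, hY⟩ := hKchain (fun i => c (Cardinal.toNat i.1.card)) (fun i => hcK _) <| by
    rintro ⟨i, hi⟩ ⟨j, hj⟩ hij
    obtain ⟨m, rfl⟩ := Ordinal.lt_omega0.mp hi
    obtain ⟨n, rfl⟩ := Ordinal.lt_omega0.mp hj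
    simp only [Ordinal.card_nat, Cardinal.toNat_natCast]
    exact hc (Nat.cast_le.mp (show (m : Ordinal) ≤ n from hij))
  refine ⟨Y, hYK, fun n => ?_⟩
  simpa using hY ⟨n, Ordinal.natCast_lt_omega0 n⟩

section Branch

variable {α : Type*} {I K : Set (Set α)}

theorem exists_descending_seq_fixing_bits (hdown : ∀ Y Z : Set α, Y ⊆ Z → Z ∈ I → Y ∈ I)
    (hunion : ∀ A B : Set α, A ∈ I → B ∈ I → A ∪ B ∈ I) (hKpos : ∀ Y ∈ K, Y ∉ I)
    (hKdense : ∀ X : Set α, X ∉ I → ∃ Y ∈ K, Y ⊆ X) {Y₀ : Set α} (hY₀ : Y₀ ∈ K)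
    (t : α → ℕ → Bool) :
    ∃ (C : ℕ → Set α) (b : ℕ → Bool),
      (∀ n, C n ∈ K) ∧ ∀ n, C (n + 1) ⊆ {a ∈ C n | t a n = b n} := by
  have step (n : ℕ) (Y : K) : ∃ Z : K, ∃ b : Bool, Z.1 ⊆ {a ∈ Y.1 | t a n = b} := by
    obtain ⟨b, hb⟩ := exists_fiber_not_mem hdown hunion (t · n) (hKpos Y Y.2)
    obtain ⟨Z, hZK, hZ⟩ := hKdense _ hb
    exact ⟨⟨Z, hZK⟩, b, hZ⟩
  choose next b hnext using step
  let C : ℕ → K := fun n => Nat.rec ⟨Y₀, hY₀⟩ next n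
  exact ⟨fun n => (C n).1, fun n => b n (C n), fun n => (C n).2, fun n => hnext n (C n)⟩

theorem not_injective_to_cantor (hdown : ∀ Y Z : Set α, Y ⊆ Z → Z ∈ I → Y ∈ I)
    (hunion : ∀ A B : Set α, A ∈ I → B ∈ I → A ∪ B ∈ I)
    (hsub : ∀ s : Set α, s.Subsingleton → s ∈ I) (hKpos : ∀ Y ∈ K, Y ∉ I)
    (hKdense : ∀ X : Set α, X ∉ I → ∃ Y ∈ K, Y ⊆ X)
    (hKchain : ∀ c : ℕ → Set α, (∀ n, c n ∈ K) → Antitone c → ∃ Y ∈ K, ∀ n, Y ⊆ c n)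
    {Y₀ : Set α} (hY₀ : Y₀ ∈ K) (t : α → ℕ → Bool) : ¬ Function.Injective t := by
  intro ht
  obtain ⟨C, b, hCK, hC⟩ := exists_descending_seq_fixing_bits hdown hunion hKpos hKdense hY₀ t
  obtain ⟨Z, hZK, hZ⟩ :=
    hKchain C hCK (antitone_nat_of_succ_le fun n => (hC n).trans (Set.sep_subset _ _))
  have hpin : ∀ a ∈ Z, t a = b := fun a ha => funext fun n => (hC n (hZ (n + 1) ha)).2
  exact hKpos Z hZK (hsub Z fun x hx y hy => ht (by rw [hpin x hx, hpin y hy]))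

end Branch

theorem CH_of_I_omega_general
    (I : Set (Set O2))
    (hdown : ∀ Y Z : Set O2, Y ⊆ Z → Z ∈ I → Y ∈ I)
    (hproper : (Set.univ : Set O2) ∉ I)
    (hcomplete : ∀ S : Set (Set O2), S ⊆ I → #S < Cardinal.aleph 2 → ⋃₀ S ∈ I)
    (hsing : ∀ x : O2, ({x} : Set O2) ∈ I)
    (K : Set (Set O2))
    (hKpos : ∀ Y ∈ K, Y ∉ I)
    (hKdense : ∀ X : Set O2, X ∉ I → ∃ Y ∈ K, Y ⊆ X)
    (hKchain : ∀ δ : Ordinal, δ < (Cardinal.aleph 1).ord →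
      ∀ c : {o : Ordinal // o < δ} → Set O2, (∀ i, c i ∈ K) →
        (∀ i j, i ≤ j → c j ⊆ c i) → ∃ Y ∈ K, ∀ i, Y ⊆ c i) :
    (2 : Cardinal.{0}) ^ (Cardinal.aleph0 : Cardinal.{0}) = Cardinal.aleph 1 := by
  refine Cardinal.eq_aleph_one_of_lt_aleph_two ?_ (lt_of_not_ge fun hle => ?_)
  · exact Cardinal.two_power_aleph0 ▸ Cardinal.aleph_one_le_continuum
  obtain ⟨t⟩ := nonempty_embedding_O2_of_aleph_two_le hle
  have htwo : (2 : Cardinal) < ℵ_ 2 :=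
    (Cardinal.natCast_lt_aleph0 (n := 2)).trans_le (Cardinal.aleph0_le_aleph 2)
  obtain ⟨Y₀, hY₀K, -⟩ := hKdense _ hproper
  exact not_injective_to_cantor hdown
    (fun _ _ => union_mem_of_sUnion_mem htwo hcomplete)
    (fun _ => subsingleton_mem_of_singleton_mem hdown hsing)
    hKpos hKdense
    (fun _ => exists_lowerBound_of_antitone_nat
      (hKchain ω (Cardinal.omega0_lt_ord.mpr Cardinal.aleph0_lt_aleph_one)))
    hY₀K t t.injective

/-- The hypothesis `I(ω)`: there is a proper, ω₂-complete, normal ideal `I` on ω₂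
containing all singletons, such that the `I`-positive sets have a dense subset `K`
in which every descending chain of length `< ω₁` has a lower bound.  Then the
continuum hypothesis `2^ω = ω₁` holds. -/
theorem CH_of_I_omega
    (I : Set (Set O2))
    (hdown : ∀ Y Z : Set O2, Y ⊆ Z → Z ∈ I → Y ∈ I)
    (hproper : (Set.univ : Set O2) ∉ I)
    (hcomplete : ∀ S : Set (Set O2), S ⊆ I → #S < Cardinal.aleph 2 → ⋃₀ S ∈ I)
    (hnormal : ∀ A : O2 → Set O2, (∀ α, A α ∈ I) →
      {β : O2 | ∃ α : O2, α < β ∧ β ∈ A α} ∈ I)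
    (hsing : ∀ x : O2, ({x} : Set O2) ∈ I)
    (K : Set (Set O2))
    (hKpos : ∀ Y ∈ K, Y ∉ I)
    (hKdense : ∀ X : Set O2, X ∉ I → ∃ Y ∈ K, Y ⊆ X)
    (hKchain : ∀ δ : Ordinal, δ < (Cardinal.aleph 1).ord →
      ∀ c : {o : Ordinal // o < δ} → Set O2, (∀ i, c i ∈ K) →
        (∀ i j, i ≤ j → c j ⊆ c i) → ∃ Y ∈ K, ∀ i, Y ⊆ c i) :
    (2 : Cardinal.{0}) ^ (Cardinal.aleph0 : Cardinal.{0}) = Cardinal.aleph 1 :=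
  CH_of_I_omega_general I hdown hproper hcomplete hsing K hKpos hKdense hKchain

end
end

section
/- If 2^ω ≥ ω₂, I is an ω₂-complete ideal on a set A of ω₂-many distinct functions ω → 2 containing all singletons, and K ⊆ I⁺ is dense such that every descending ω-chain in K has a lower bound in K, then a contradiction follows. Equivalently: there is no such ideal on any family of ω₂ distinct elements of 2^ω. -/
open Cardinal

/-- Suppose `2^ω ≥ ω₂`, and let `A` be a set of ω₂-many distinct functions `ω → 2`.
Then there is no proper ω₂-complete ideal `I` on `A` containing all singletons such
that `I⁺` has a dense subset `K` in which every descending ω-chain has a lower bound: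
from such data a contradiction follows. -/
theorem no_ideal_on_branches
    (hcont : Cardinal.aleph 2 ≤ 2 ^ Cardinal.aleph0)
    (A : Set (ℕ → Bool)) (hA : #A = Cardinal.aleph 2)
    (I : Set (Set (ℕ → Bool)))
    (hsub : ∀ X ∈ I, X ⊆ A)
    (hdown : ∀ Y Z : Set (ℕ → Bool), Y ⊆ Z → Z ∈ I → Y ∈ I)
    (hcomplete : ∀ S : Set (Set (ℕ → Bool)), S ⊆ I → #S < Cardinal.aleph 2 → ⋃₀ S ∈ I)
    (hsing : ∀ a ∈ A, ({a} : Set (ℕ → Bool)) ∈ I)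
    (hAI : A ∉ I)
    (K : Set (Set (ℕ → Bool)))
    (hKpos : ∀ Y ∈ K, Y ⊆ A ∧ Y ∉ I)
    (hKdense : ∀ X : Set (ℕ → Bool), X ⊆ A → X ∉ I → ∃ Y ∈ K, Y ⊆ X)
    (hKchain : ∀ c : ℕ → Set (ℕ → Bool), (∀ n, c n ∈ K) → (∀ n, c (n + 1) ⊆ c n) →
      ∃ Y ∈ K, ∀ n, Y ⊆ c n) :
    False := by
  classical
  -- finite unions of members of I are in I
  have hunion : ∀ U V : Set (ℕ → Bool), U ∈ I → V ∈ I → U ∪ V ∈ I := by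
    intro U V hU hV
    have h := hcomplete {U, V} (by
      intro X hX
      rcases hX with h | h
      · exact h ▸ hU
      · exact h ▸ hV)
      (lt_of_lt_of_le ((Set.toFinite _).lt_aleph0) (aleph0_le_aleph 2))
    simpa [Set.sUnion_insert] using h
  -- key step: any K-set can be refined to a K-set whose elements all agree at coordinate n
  have step : ∀ X ∈ K, ∀ n : ℕ, ∃ Y ∈ K, Y ⊆ X ∧ ∃ b : Bool, ∀ x ∈ Y, x n = b := by
    intro X hX n
    obtain ⟨hXA, hXI⟩ := hKpos X hX
    by_cases ht : X ∩ {x | x n = true} ∈ I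
    · by_cases hf : X ∩ {x | x n = false} ∈ I
      · exfalso
        apply hXI
        apply hdown X _ _ (hunion _ _ ht hf)
        intro x hx
        cases h : x n
        · exact Or.inr ⟨hx, h⟩
        · exact Or.inl ⟨hx, h⟩
      · obtain ⟨Y, hY, hYs⟩ := hKdense _ (fun x hx => hXA hx.1) hf
        exact ⟨Y, hY, fun x hx => (hYs hx).1, false, fun x hx => (hYs hx).2⟩
    · obtain ⟨Y, hY, hYs⟩ := hKdense _ (fun x hx => hXA hx.1) ht
      exact ⟨Y, hY, fun x hx => (hYs hx).1, true, fun x hx => (hYs hx).2⟩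
  -- start of the chain
  obtain ⟨X0, hX0, _⟩ := hKdense A (subset_refl A) hAI
  -- construct the chain
  choose F hFK hFsub hFagree using step
  let c : ℕ → Set (ℕ → Bool) := fun n => Nat.rec X0 (fun n X => if h : X ∈ K then F X h n else X) n
  have hcK : ∀ n, c n ∈ K := by
    intro n
    induction n with
    | zero => exact hX0
    | succ n ih =>
      show (if h : c n ∈ K then F (c n) h n else c n) ∈ K
      rw [dif_pos ih]; exact hFK _ ih n
  have hcsub : ∀ n, c (n + 1) ⊆ c n := by
    intro n
    show (if h : c n ∈ K then F (c n) h n else c n) ⊆ c n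
    rw [dif_pos (hcK n)]; exact hFsub _ (hcK n) n
  have hcagree : ∀ n, ∃ b : Bool, ∀ x ∈ c (n + 1), x n = b := by
    intro n
    show ∃ b : Bool, ∀ x ∈ (if h : c n ∈ K then F (c n) h n else c n), x n = b
    rw [dif_pos (hcK n)]; exact hFagree _ (hcK n) n
  -- lower bound
  obtain ⟨Y, hYK, hYsub⟩ := hKchain c hcK hcsub
  obtain ⟨hYA, hYI⟩ := hKpos Y hYK
  -- Y is a subsingleton
  have hss : ∀ x ∈ Y, ∀ y ∈ Y, x = y := by
    intro x hx y hy
    funext n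
    obtain ⟨b, hb⟩ := hcagree n
    rw [hb x (hYsub (n + 1) hx), hb y (hYsub (n + 1) hy)]
  -- Y is nonempty (else Y = ∅ ∈ I)
  have hne : Y.Nonempty := by
    by_contra h
    rw [Set.not_nonempty_iff_eq_empty] at h
    apply hYI
    rw [h]
    simpa using hcomplete ∅ (by simp) (by simpa using lt_of_lt_of_le aleph0_pos (aleph0_le_aleph 2))
  obtain ⟨a, ha⟩ := hne
  exact hYI (hdown Y {a} (fun x hx => hss x hx a ha) (hsing a (hYA ha)))
end

section
/- Let T be a tree of height ω₁, each of whose levels has at most ω₁ nodes, with exactly λ branches of length ω₁, where ω₁ < λ < 2^{ω₁}. Then there is a first-order structure M (in a possibly infinite relational vocabulary) of cardinality ω₁ whose automorphism group has cardinality exactly λ. -/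
open Cardinal FirstOrder

noncomputable section

/-!
At each level `α < ω₁` the structure has one element for every finite set of level-`α` nodes
lying on uncountable branches. Its relations toggle a single node inside a level, and project
a set `s` down to a lower level `β`, keeping the level-`β` nodes with an odd number of
successors in `s`. An automorphism is determined by the images `τ α` of the empty sets, and
these form a coherent sequence (`τ β` is the projection of `τ α`); conversely every coherent
sequence acts by translation. The sizes of a coherent sequence are nondecreasing, hence
eventually constant as ω₁ has uncountable cofinality, and above that point projection is a
bijection, so the sequence is the mod-2 sum of finitely many branches. Hence the automorphism
group has the cardinality `λ` of the finite sets of branches, while the structure has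
cardinality `ℵ₁`.
-/

namespace TreeModel

open scoped symmDiff Classical

theorem card_symmDiff_add_two_mul_card_inter {α : Type*} [DecidableEq α] (s t : Finset α) :
    (s ∆ t).card + 2 * (s ∩ t).card = s.card + t.card := by
  rw [symmDiff_eq_sup_sdiff_inf, Finset.sup_eq_union, Finset.inf_eq_inter,
    Finset.card_sdiff_of_subset Finset.inter_subset_union, ← Finset.card_union_add_card_inter]
  have := Finset.card_le_card (Finset.inter_subset_union (s := s) (t := t))
  omega

theorem odd_card_symmDiff {α : Type*} [DecidableEq α] (s t : Finset α) :
    Odd (s ∆ t).card ↔ ¬(Odd s.card ↔ Odd t.card) := by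
  have := card_symmDiff_add_two_mul_card_inter s t
  rw [Nat.odd_iff, Nat.odd_iff, Nat.odd_iff]
  omega

theorem symmDiff_singleton_eq_insert {α : Type*} [DecidableEq α] {s : Finset α} {a : α}
    (ha : a ∉ s) : s ∆ {a} = insert a s := by
  rw [Finset.symmDiff_eq_union (Finset.disjoint_singleton_right.2 ha), Finset.union_comm,
    ← Finset.insert_eq]

theorem exists_forall_ge_eq_of_monotone {f : O1 → ℕ} (hf : Monotone f) :
    ∃ α₀, ∀ α, α₀ ≤ α → f α = f α₀ := by
  have hω : om1 = Ordinal.omega 1 := ord_aleph 1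
  have hbdd : BddAbove (Set.range f) := by
    by_contra hunb
    have hlarge : ∀ n : ℕ, ∃ α, n < f α := by
      simpa [bddAbove_def, not_forall, not_le] using hunb
    choose g hg using hlarge
    have hsup : ⨆ n, (g n : Ordinal) < om1 :=
      (Ordinal.iSup_lt_omega_one fun n => (g n).2.trans_eq hω).trans_eq hω.symm
    let σ : O1 := ⟨_, hsup⟩
    have hσ : ∀ n, g n ≤ σ := fun n => Ordinal.le_iSup (fun n => (g n : Ordinal)) n
    exact (hg (f σ)).not_ge (hf (hσ (f σ)))
  have hne : (Set.range f).Nonempty :=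
    ⟨_, ⟨0, (Ordinal.omega_pos 1).trans_eq hω.symm⟩, rfl⟩
  obtain ⟨α₀, hα₀⟩ := Nat.sSup_mem hne hbdd
  exact ⟨α₀, fun α h => le_antisymm (hα₀ ▸ le_csSup hbdd ⟨α, rfl⟩) (hf h)⟩

theorem mk_O1 : #O1 = lift.{1} (aleph.{0} 1) := by
  have := mk_Iio_ordinal om1
  rwa [card_ord] at this

theorem mk_le_aleph_one {T : Type} {lvl : T → Ordinal.{0}} (hheight : ∀ t, lvl t < om1)
    (hlevcard : ∀ α : Ordinal, #{t : T // lvl t = α} ≤ aleph 1) : #T ≤ aleph 1 := by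
  have h := lift_mk_le_lift_mk_mul_of_lift_mk_preimage_le
    (fun t : T => (⟨lvl t, hheight t⟩ : O1)) (c := lift.{1} (aleph 1)) fun α =>
      lift_le.2 <| (mk_congr (Equiv.subtypeEquivRight fun t =>
        show (⟨lvl t, hheight t⟩ : O1) = α ↔ lvl t = α from Subtype.ext_iff)).trans_le
          (hlevcard α)
  rwa [lift_uzero, mk_O1, ← lift_mul, mul_eq_self (aleph0_le_aleph 1), lift_le] at h

variable {T : Type} [PartialOrder T]

structure IsTreeLevel (lvl : T → Ordinal.{0}) : Prop where
  strictMono : StrictMono lvl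
  le_or_le_of_lt : ∀ x y z : T, x < z → y < z → x ≤ y ∨ y ≤ x

variable {lvl : T → Ordinal.{0}}

section Ancestors

theorem IsTreeLevel.le_or_le_of_le (hT : IsTreeLevel lvl) {x y z : T} (hx : x ≤ z)
    (hy : y ≤ z) : x ≤ y ∨ y ≤ x := by
  rcases hx.lt_or_eq with hx | rfl
  · rcases hy.lt_or_eq with hy | rfl
    · exact hT.le_or_le_of_lt x y _ hx hy
    · exact Or.inl hx.le
  · exact Or.inr hy

theorem IsTreeLevel.le_of_le_of_lvl_le (hT : IsTreeLevel lvl) {x y z : T} (hx : x ≤ z)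
    (hy : y ≤ z) (h : lvl x ≤ lvl y) : x ≤ y := by
  rcases hT.le_or_le_of_le hx hy with hxy | hyx
  · exact hxy
  · rcases hyx.lt_or_eq with hyx | rfl
    · exact absurd h (not_le.2 (hT.strictMono hyx))
    · exact le_rfl

theorem IsTreeLevel.eq_of_le_of_lvl_eq (hT : IsTreeLevel lvl) {x y z : T} (hx : x ≤ z)
    (hy : y ≤ z) (h : lvl x = lvl y) : x = y :=
  le_antisymm (hT.le_of_le_of_lvl_le hx hy h.le) (hT.le_of_le_of_lvl_le hy hx h.ge)

variable (lvl) in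
/-- The ancestor of `v` at level `β` (junk value `v` if there is none). -/
def anc (β : Ordinal) (v : T) : T :=
  if h : ∃ u ≤ v, lvl u = β then h.choose else v

theorem anc_spec {β : Ordinal} {v : T} (h : ∃ u ≤ v, lvl u = β) :
    anc lvl β v ≤ v ∧ lvl (anc lvl β v) = β := by
  rw [anc, dif_pos h]
  exact h.choose_spec

theorem IsTreeLevel.anc_eq (hT : IsTreeLevel lvl) {β : Ordinal} {u v : T} (hu : u ≤ v)
    (hl : lvl u = β) : anc lvl β v = u := by
  obtain ⟨hle, hlvl⟩ := anc_spec ⟨u, hu, hl⟩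
  exact hT.eq_of_le_of_lvl_eq hle hu (hlvl.trans hl.symm)

theorem IsTreeLevel.anc_self (hT : IsTreeLevel lvl) {β : Ordinal} {v : T} (hv : lvl v = β) :
    anc lvl β v = v :=
  hT.anc_eq le_rfl hv

end Ancestors

section Branches

variable (lvl) in
abbrev Branch : Type 1 := {b : O1 → T // StrictMono b ∧ ∀ α : O1, lvl (b α) = α}

variable (lvl) in
def OnBranch (t : T) : Prop := ∃ (b : Branch lvl) (α : O1), b.1 α = t

theorem OnBranch.anc_spec {t : T} (ht : OnBranch lvl t) {β : Ordinal} (hβ : β ≤ lvl t) :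
    anc lvl β t ≤ t ∧ lvl (anc lvl β t) = β := by
  obtain ⟨b, α, rfl⟩ := ht
  have hβα : (⟨β, hβ.trans_lt (b.2.2 α ▸ α.2)⟩ : O1) ≤ α :=
    Subtype.mk_le_mk.2 (by rwa [b.2.2] at hβ)
  exact TreeModel.anc_spec ⟨_, b.2.1.monotone hβα, b.2.2 _⟩

theorem IsTreeLevel.anc_anc (hT : IsTreeLevel lvl) {t : T} (ht : OnBranch lvl t)
    {β γ : Ordinal} (hβγ : β ≤ γ) (hγ : γ ≤ lvl t) :
    anc lvl β (anc lvl γ t) = anc lvl β t := by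
  obtain ⟨hγt, hγl⟩ := ht.anc_spec hγ
  obtain ⟨hβt, hβl⟩ := ht.anc_spec (hβγ.trans hγ)
  exact hT.anc_eq (hT.le_of_le_of_lvl_le hβt hγt (by rw [hβl, hγl]; exact hβγ)) hβl

theorem IsTreeLevel.le_branch_iff (hT : IsTreeLevel lvl) (b : Branch lvl) {β α : O1}
    (hβα : β ≤ α) {u : T} (hu : lvl u = β) : u ≤ b.1 α ↔ b.1 β = u := by
  constructor
  · intro h
    exact hT.eq_of_le_of_lvl_eq (b.2.1.monotone hβα) h (by rw [b.2.2, hu])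
  · rintro rfl
    exact b.2.1.monotone hβα

theorem IsTreeLevel.branch_eq_of_le (hT : IsTreeLevel lvl) {b b' : Branch lvl} {β α : O1}
    (h : b.1 α = b'.1 α) (hβα : β ≤ α) : b.1 β = b'.1 β :=
  ((hT.le_branch_iff b' hβα (b.2.2 β)).1 (h ▸ b.2.1.monotone hβα)).symm

theorem IsTreeLevel.strictMono_of_le_or_le (hT : IsTreeLevel lvl) {f : O1 → T}
    (hf : ∀ α, lvl (f α) = α) (hc : ∀ α β, f α ≤ f β ∨ f β ≤ f α) : StrictMono f := by
  intro β α hβα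
  rcases hc β α with h | h
  · exact h.lt_of_ne fun he => hβα.ne (Subtype.ext (by rw [← hf β, ← hf α, he]))
  · have := hT.strictMono.monotone h
    rw [hf, hf] at this
    exact absurd hβα (not_lt.2 (Subtype.coe_le_coe.1 this))

end Branches

section Projection

variable (lvl) in
/-- `s.image (anc lvl β)` only serves as a finite set of candidates. -/
def proj (β : Ordinal) (s : Finset T) : Finset T :=
  (s.image (anc lvl β)).filter fun u => lvl u = β ∧ Odd (s.filter (u ≤ ·)).card

theorem IsTreeLevel.mem_proj (hT : IsTreeLevel lvl) {β : Ordinal} {s : Finset T} {u : T} :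
    u ∈ proj lvl β s ↔ lvl u = β ∧ Odd (s.filter (u ≤ ·)).card := by
  refine ⟨fun h => (Finset.mem_filter.1 h).2, fun h => Finset.mem_filter.2 ⟨?_, h⟩⟩
  obtain ⟨v, hv⟩ := Finset.card_pos.1 h.2.pos
  obtain ⟨hvs, huv⟩ := Finset.mem_filter.1 hv
  exact Finset.mem_image.2 ⟨v, hvs, hT.anc_eq huv h.1⟩

theorem proj_empty {β : Ordinal} : proj lvl β (∅ : Finset T) = ∅ := by
  simp [proj]

theorem card_proj_le {β : Ordinal} {s : Finset T} : (proj lvl β s).card ≤ s.card :=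
  (Finset.card_filter_le _ _).trans Finset.card_image_le

theorem IsTreeLevel.proj_symmDiff (hT : IsTreeLevel lvl) {β : Ordinal} (s t : Finset T) :
    proj lvl β (s ∆ t) = proj lvl β s ∆ proj lvl β t := by
  ext u
  have hfilter : (s ∆ t).filter (u ≤ ·) = s.filter (u ≤ ·) ∆ t.filter (u ≤ ·) := by
    ext v
    simp only [Finset.mem_filter, Finset.mem_symmDiff]
    tauto
  rw [Finset.mem_symmDiff, hT.mem_proj, hT.mem_proj, hT.mem_proj, hfilter, odd_card_symmDiff]
  tauto

theorem IsTreeLevel.proj_singleton (hT : IsTreeLevel lvl) (b : Branch lvl) {β α : O1}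
    (hβα : β ≤ α) : proj lvl β {b.1 α} = {b.1 β} := by
  ext u
  rw [hT.mem_proj, Finset.mem_singleton, Finset.filter_singleton]
  by_cases hl : lvl u = β
  · have key := hT.le_branch_iff b hβα hl
    by_cases h : u ≤ b.1 α
    · rw [if_pos h, Finset.card_singleton]
      exact iff_of_true ⟨hl, odd_one⟩ (key.1 h).symm
    · rw [if_neg h]
      exact iff_of_false (by simp) fun he => h (key.2 he.symm)
  · exact iff_of_false (fun h => hl h.1) fun h => hl (h ▸ b.2.2 β)

end Projection

section Coherent

variable (lvl) in
structure IsCoherent (τ : O1 → Finset T) : Prop where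
  onBranch : ∀ α, ∀ u ∈ τ α, OnBranch lvl u ∧ lvl u = α
  proj_eq : ∀ {β α : O1}, β ≤ α → proj lvl β (τ α) = τ β

variable (lvl) in
abbrev CoherentSeq : Type 1 := {τ : O1 → Finset T // IsCoherent lvl τ}

def Branch.toCoherentSeq (hT : IsTreeLevel lvl) (b : Branch lvl) : CoherentSeq lvl :=
  ⟨fun α => {b.1 α},
    ⟨fun α _ hu => Finset.mem_singleton.1 hu ▸ ⟨⟨b, α, rfl⟩, b.2.2 α⟩,
      fun hβα => hT.proj_singleton b hβα⟩⟩

theorem Branch.toCoherentSeq_injective (hT : IsTreeLevel lvl) :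
    Function.Injective (Branch.toCoherentSeq hT) := fun _ _ h =>
  Subtype.ext <| funext fun α =>
    Finset.singleton_injective (congrFun (congrArg Subtype.val h) α)

theorem IsCoherent.card_le {τ : O1 → Finset T} (hτ : IsCoherent lvl τ) {β α : O1}
    (hβα : β ≤ α) : (τ β).card ≤ (τ α).card :=
  hτ.proj_eq hβα ▸ card_proj_le

theorem IsCoherent.bijOn_anc {τ : O1 → Finset T} (hτ : IsCoherent lvl τ) {β α : O1} (hβα : β ≤ α)
    (hcard : (τ β).card = (τ α).card) : Set.BijOn (anc lvl β) (τ α) (τ β) := by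
  have hsub : τ β ⊆ (τ α).image (anc lvl β) := hτ.proj_eq hβα ▸ Finset.filter_subset _ _
  have himage : (τ α).image (anc lvl β) = τ β :=
    (Finset.eq_of_subset_of_card_le hsub (Finset.card_image_le.trans hcard.ge)).symm
  have hinj : Set.InjOn (anc lvl β) (τ α) := by
    rw [← Finset.card_image_iff, himage, hcard]
  rw [← himage, Finset.coe_image]
  exact hinj.bijOn_image

end Coherent

section Plateau

variable {τ : O1 → Finset T} {α₀ : O1}

theorem IsCoherent.bijOn_anc_of_plateau (hτ : IsCoherent lvl τ)
    (hplat : ∀ α, α₀ ≤ α → (τ α).card = (τ α₀).card) {β α : O1} (hβ : α₀ ≤ β) (hβα : β ≤ α) :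
    Set.BijOn (anc lvl β) (τ α) (τ β) :=
  hτ.bijOn_anc hβα (by rw [hplat β hβ, hplat α (hβ.trans hβα)])

variable (lvl) in
def nodeAbove (τ : O1 → Finset T) (α₀ : O1) (t : T) (α : O1) : T :=
  if h : ∃ v ∈ τ α, anc lvl α₀ v = t then h.choose else t

variable (hτ : IsCoherent lvl τ) (hplat : ∀ α, α₀ ≤ α → (τ α).card = (τ α₀).card)
  {t : T} (ht : t ∈ τ α₀)

include hτ hplat ht in
theorem nodeAbove_spec {α : O1} (hα : α₀ ≤ α) :
    nodeAbove lvl τ α₀ t α ∈ τ α ∧ anc lvl α₀ (nodeAbove lvl τ α₀ t α) = t := by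
  have h : ∃ v ∈ τ α, anc lvl α₀ v = t := (hτ.bijOn_anc_of_plateau hplat le_rfl hα).surjOn ht
  rw [nodeAbove, dif_pos h]
  exact h.choose_spec

include hτ hplat in
theorem nodeAbove_anc {α : O1} (hα : α₀ ≤ α) {v : T} (hv : v ∈ τ α) :
    nodeAbove lvl τ α₀ (anc lvl α₀ v) α = v :=
  have hbij := hτ.bijOn_anc_of_plateau hplat le_rfl hα
  have hspec := nodeAbove_spec hτ hplat (hbij.mapsTo hv) hα
  hbij.injOn hspec.1 hv hspec.2

include hτ hplat ht in
theorem IsTreeLevel.nodeAbove_mono (hT : IsTreeLevel lvl) {α' α : O1} (h₀ : α₀ ≤ α')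
    (h : α' ≤ α) : nodeAbove lvl τ α₀ t α' ≤ nodeAbove lvl τ α₀ t α := by
  obtain ⟨hv, hvt⟩ := nodeAbove_spec hτ hplat ht (h₀.trans h)
  set v := nodeAbove lvl τ α₀ t α
  obtain ⟨hvB, hvl⟩ := hτ.onBranch α v hv
  have hα' : (α' : Ordinal) ≤ lvl v := hvl ▸ h
  have hw : anc lvl α' v ∈ τ α' := (hτ.bijOn_anc_of_plateau hplat h₀ h).mapsTo hv
  have hwt : anc lvl α₀ (anc lvl α' v) = t := by rw [hT.anc_anc hvB h₀ hα', hvt]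
  calc nodeAbove lvl τ α₀ t α' = anc lvl α' v := hwt ▸ nodeAbove_anc hτ hplat h₀ hw
    _ ≤ v := (hvB.anc_spec hα').1

variable (lvl) in
def branchFun (τ : O1 → Finset T) (α₀ : O1) (t : T) (β : O1) : T :=
  anc lvl β (nodeAbove lvl τ α₀ t (max β α₀))

include hτ hplat ht in
theorem IsTreeLevel.branchFun_spec (hT : IsTreeLevel lvl) {β α : O1} (hβ : β ≤ α)
    (h₀ : α₀ ≤ α) : branchFun lvl τ α₀ t β ≤ nodeAbove lvl τ α₀ t α ∧
      lvl (branchFun lvl τ α₀ t β) = β := by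
  obtain ⟨hc, -⟩ := nodeAbove_spec hτ hplat ht (le_max_right β α₀)
  obtain ⟨hcB, hcl⟩ := hτ.onBranch _ _ hc
  obtain ⟨hle, hl⟩ := hcB.anc_spec (hcl ▸ Subtype.coe_le_coe.2 (le_max_left β α₀))
  exact ⟨hle.trans (hT.nodeAbove_mono hτ hplat ht (le_max_right β α₀) (max_le hβ h₀)), hl⟩

/-- The branch through `t` that stays inside `τ` above the plateau level `α₀`. -/
def IsTreeLevel.branchThrough (hT : IsTreeLevel lvl) : Branch lvl :=
  ⟨branchFun lvl τ α₀ t,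
    hT.strictMono_of_le_or_le
      (fun β => (hT.branchFun_spec hτ hplat ht (le_max_left β α₀) (le_max_right β α₀)).2)
      fun β β' =>
        hT.le_or_le_of_le
          (hT.branchFun_spec hτ hplat ht ((le_max_left β β').trans (le_max_left _ α₀))
            (le_max_right _ α₀)).1
          (hT.branchFun_spec hτ hplat ht ((le_max_right β β').trans (le_max_left _ α₀))
            (le_max_right _ α₀)).1,
    fun β => (hT.branchFun_spec hτ hplat ht (le_max_left β α₀) (le_max_right β α₀)).2⟩

theorem IsTreeLevel.branchThrough_apply (hT : IsTreeLevel lvl) {α : O1} (hα : α₀ ≤ α) :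
    (hT.branchThrough hτ hplat ht).1 α = nodeAbove lvl τ α₀ t α := by
  change anc lvl α (nodeAbove lvl τ α₀ t (max α α₀)) = _
  rw [max_eq_left hα]
  exact hT.anc_self (hτ.onBranch α _ (nodeAbove_spec hτ hplat ht hα).1).2

theorem IsTreeLevel.branchThrough_apply_self (hT : IsTreeLevel lvl) :
    (hT.branchThrough hτ hplat ht).1 α₀ = t := by
  obtain ⟨hc, hct⟩ := nodeAbove_spec hτ hplat ht le_rfl
  rw [hT.branchThrough_apply hτ hplat ht le_rfl]
  exact (hT.anc_self (hτ.onBranch α₀ _ hc).2).symm.trans hct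

omit ht

def IsTreeLevel.plateauBranches (hT : IsTreeLevel lvl) : Finset (Branch lvl) :=
  (τ α₀).attach.image fun t => hT.branchThrough hτ hplat t.2

theorem IsTreeLevel.image_plateauBranches (hT : IsTreeLevel lvl) {α : O1} (hα : α₀ ≤ α) :
    (hT.plateauBranches hτ hplat).image (fun b => b.1 α) = τ α := by
  ext v
  simp only [IsTreeLevel.plateauBranches, Finset.mem_image, Finset.mem_attach, true_and]
  constructor
  · rintro ⟨_, ⟨⟨t, ht⟩, rfl⟩, rfl⟩
    rw [hT.branchThrough_apply hτ hplat ht hα]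
    exact (nodeAbove_spec hτ hplat ht hα).1
  · intro hv
    have ht := (hτ.bijOn_anc_of_plateau hplat le_rfl hα).mapsTo hv
    exact ⟨_, ⟨⟨_, ht⟩, rfl⟩, by
      rw [hT.branchThrough_apply hτ hplat ht hα, nodeAbove_anc hτ hplat hα hv]⟩

theorem IsTreeLevel.injOn_plateauBranches (hT : IsTreeLevel lvl) {α : O1} (hα : α₀ ≤ α) :
    Set.InjOn (fun b : Branch lvl => b.1 α) (hT.plateauBranches hτ hplat) := by
  intro b hb b' hb' h
  obtain ⟨⟨t, ht⟩, -, rfl⟩ := Finset.mem_image.1 hb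
  obtain ⟨⟨t', ht'⟩, -, rfl⟩ := Finset.mem_image.1 hb'
  have htt' := hT.branch_eq_of_le h hα
  rw [hT.branchThrough_apply_self, hT.branchThrough_apply_self] at htt'
  subst htt'
  rfl

end Plateau

theorem IsCoherent.exists_finset_branch (hT : IsTreeLevel lvl) {τ : O1 → Finset T}
    (hτ : IsCoherent lvl τ) : ∃ S : Finset (Branch lvl),
      ∀ β u, u ∈ τ β ↔ Odd (S.filter fun b => b.1 β = u).card := by
  obtain ⟨α₀, hplat⟩ := exists_forall_ge_eq_of_monotone fun _ _ h => hτ.card_le h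
  refine ⟨hT.plateauBranches hτ hplat, fun β u => ?_⟩
  have hβ : β ≤ max β α₀ := le_max_left β α₀
  have hα : α₀ ≤ max β α₀ := le_max_right β α₀
  -- at level `max β α₀`, `b ↦ b.1 (max β α₀)` is a bijection from the plateau branches onto
  -- `τ (max β α₀)`, and `u ≤ b.1 (max β α₀) ↔ b.1 β = u`
  by_cases hu : lvl u = β
  · have hcount : ((hT.plateauBranches hτ hplat).filter fun b => b.1 β = u).card =
        ((τ (max β α₀)).filter (u ≤ ·)).card := by
      rw [← hT.image_plateauBranches hτ hplat hα, Finset.filter_image,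
        Finset.card_image_of_injOn ((hT.injOn_plateauBranches hτ hplat hα).mono
          (Finset.coe_subset.2 (Finset.filter_subset _ _)))]
      exact congrArg Finset.card
        (Finset.filter_congr fun b _ => (hT.le_branch_iff b hβ hu).symm)
    rw [hcount, ← hτ.proj_eq hβ, hT.mem_proj, and_iff_right hu]
  · refine iff_of_false (fun h => hu (hτ.onBranch β u h).2) ?_
    rw [Finset.filter_false_of_mem fun b _ (hb : b.1 β = u) => hu (hb ▸ b.2.2 β)]
    simp

theorem mk_coherentSeq (hT : IsTreeLevel lvl) [Infinite (Branch lvl)] :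
    #(CoherentSeq lvl) = #(Branch lvl) := by
  refine le_antisymm ?_ (mk_le_of_injective (Branch.toCoherentSeq_injective hT))
  choose S hS using fun τ : CoherentSeq lvl => τ.2.exists_finset_branch hT
  have hSinj : Function.Injective S := fun τ τ' h =>
    Subtype.ext <| funext fun β => Finset.ext fun u => by rw [hS, h, ← hS]
  exact (mk_le_of_injective hSinj).trans (mk_finset_of_infinite _).le

section Model

universe u v

open FirstOrder.Language.Structure (RelMap)

/-- An element of level `α` is a finite set of level-`α` nodes on branches; its level is
recorded by the node `b₀ α`, which keeps the carrier in `Type`. -/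
@[ext]
structure Elem (b₀ : Branch lvl) : Type where
  base : T
  val : Finset T
  base_mem : base ∈ Set.range b₀.1
  onBranch_of_mem_val : ∀ u ∈ val, OnBranch lvl u ∧ lvl u = lvl base

namespace Elem

variable {b₀ : Branch lvl}

def level (x : Elem b₀) : O1 :=
  ⟨lvl x.base, by obtain ⟨α, hα⟩ := x.base_mem; rw [← hα, b₀.2.2]; exact α.2⟩

theorem apply_level (x : Elem b₀) : b₀.1 x.level = x.base := by
  obtain ⟨α, hα⟩ := x.base_mem
  have : x.level = α := Subtype.ext (show lvl x.base = α by rw [← hα, b₀.2.2])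
  rw [this, hα]

theorem mem_val {x : Elem b₀} {u : T} (hu : u ∈ x.val) : OnBranch lvl u ∧ lvl u = x.level :=
  x.onBranch_of_mem_val u hu

theorem ext_level {x y : Elem b₀} (hl : x.level = y.level) (hv : x.val = y.val) : x = y :=
  Elem.ext (by rw [← apply_level, hl, apply_level]) hv

variable (b₀) in
def of (α : O1) (s : Finset T) (hs : ∀ u ∈ s, OnBranch lvl u ∧ lvl u = α) : Elem b₀ :=
  ⟨b₀.1 α, s, ⟨α, rfl⟩, by rwa [b₀.2.2]⟩

@[simp]
theorem level_of {α : O1} {s : Finset T} {hs} : (of b₀ α s hs).level = α :=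
  Subtype.ext (b₀.2.2 α)

@[simp]
theorem val_of {α : O1} {s : Finset T} {hs} : (of b₀ α s hs).val = s :=
  rfl

theorem of_level_val (x : Elem b₀) : of b₀ x.level x.val (fun _ => mem_val) = x :=
  ext_level level_of rfl

variable (b₀) in
def zero (α : O1) : Elem b₀ :=
  of b₀ α ∅ (by simp)

end Elem

open Elem

inductive Rel (T : Type) : ℕ → Type v
  | toggle : T → Rel T 2
  | project : T → Rel T 2

def language (T : Type) : FirstOrder.Language.{u, v} :=
  ⟨fun _ => PEmpty, Rel.{v} T⟩

instance (T : Type) : (language.{u, v} T).IsRelational :=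
  fun _ => inferInstanceAs (IsEmpty PEmpty)

variable {b₀ : Branch lvl}

def IsToggle (t : T) (x y : Elem b₀) : Prop :=
  (x.level : Ordinal) = lvl t ∧ (y.level : Ordinal) = lvl t ∧ y.val = x.val ∆ {t}

def IsProj (t : T) (x y : Elem b₀) : Prop :=
  lvl t ≤ x.level ∧ (y.level : Ordinal) = lvl t ∧ y.val = proj lvl (lvl t) x.val

instance : (language.{u, v} T).Structure (Elem b₀) where
  RelMap
    | .toggle t, xs => IsToggle t (xs 0) (xs 1)
    | .project t, xs => IsProj t (xs 0) (xs 1)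

section Automorphisms

variable (g : Elem b₀ ≃[language.{u, v} T] Elem b₀)

theorem relMap_map (r : (language.{u, v} T).Relations 2) (x y : Elem b₀) :
    RelMap r ![g x, g y] ↔ RelMap r ![x, y] := by
  have h : g ∘ ![x, y] = ![g x, g y] := by
    funext i
    fin_cases i <;> rfl
  rw [← h]
  exact g.map_rel r _

theorem isToggle_map {t : T} {x y : Elem b₀} : IsToggle t (g x) (g y) ↔ IsToggle t x y :=
  relMap_map g (.toggle t) x y

theorem isProj_map {t : T} {x y : Elem b₀} : IsProj t (g x) (g y) ↔ IsProj t x y :=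
  relMap_map g (.project t) x y

theorem level_map (x : Elem b₀) : (g x).level = x.level := by
  let y := of b₀ x.level (x.val ∆ {b₀.1 x.level}) fun u hu =>
    (Finset.mem_union.1 (Finset.symmDiff_subset_union hu)).elim mem_val fun hu =>
      Finset.mem_singleton.1 hu ▸ ⟨⟨b₀, _, rfl⟩, b₀.2.2 _⟩
  have hxy : IsToggle (b₀.1 x.level) x y := ⟨(b₀.2.2 _).symm, by simp [y, b₀.2.2], rfl⟩
  exact Subtype.ext (((isToggle_map g).2 hxy).1.trans (b₀.2.2 _))

theorem val_map_of (α : O1) (s : Finset T) (hs : ∀ u ∈ s, OnBranch lvl u ∧ lvl u = α) :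
    (g (of b₀ α s hs)).val = (g (zero b₀ α)).val ∆ s := by
  induction s using Finset.induction_on with
  | empty => exact (symmDiff_bot _).symm
  | insert a s ha ih =>
    have hs' : ∀ u ∈ s, OnBranch lvl u ∧ lvl u = α :=
      fun u hu => hs u (Finset.mem_insert_of_mem hu)
    have hα : (α : Ordinal) = lvl a := (hs a (Finset.mem_insert_self a s)).2.symm
    have hrel : IsToggle a (of b₀ α s hs') (of b₀ α (insert a s) hs) :=
      ⟨by simpa using hα, by simpa using hα, by simp [symmDiff_singleton_eq_insert ha]⟩
    rw [((isToggle_map g).2 hrel).2.2, ih hs', symmDiff_assoc, symmDiff_singleton_eq_insert ha]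

theorem val_map (x : Elem b₀) : (g x).val = x.val ∆ (g (zero b₀ x.level)).val := by
  conv_lhs => rw [← of_level_val x]
  rw [val_map_of, symmDiff_comm]

def autSeq (α : O1) : Finset T :=
  (g (zero b₀ α)).val

theorem isCoherent_autSeq : IsCoherent lvl (autSeq g) where
  onBranch α u hu := by
    have := mem_val hu
    rwa [level_map, zero, level_of] at this
  proj_eq {β α} hβα := by
    have hrel : IsProj (b₀.1 β) (zero b₀ α) (zero b₀ β) :=
      ⟨by simpa [zero, b₀.2.2] using hβα, by simp [zero, b₀.2.2], by simp [zero, proj_empty]⟩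
    have := ((isProj_map g).2 hrel).2.2
    rw [b₀.2.2] at this
    exact this.symm

end Automorphisms

section Translations

variable {τ : O1 → Finset T} (hτ : IsCoherent lvl τ)

def translateFun (x : Elem b₀) : Elem b₀ :=
  of b₀ x.level (x.val ∆ τ x.level) fun u hu =>
    (Finset.mem_union.1 (Finset.symmDiff_subset_union hu)).elim mem_val (hτ.onBranch _ u)

theorem translateFun_translateFun (x : Elem b₀) :
    translateFun hτ (translateFun hτ x) = x :=
  ext_level (by simp [translateFun]) (by simp [translateFun])

theorem isToggle_translateFun {t : T} {x y : Elem b₀} :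
    IsToggle t (translateFun hτ x) (translateFun hτ y) ↔ IsToggle t x y := by
  simp only [IsToggle, translateFun, level_of, val_of]
  refine and_congr_right fun hx => and_congr_right fun hy => ?_
  rw [show y.level = x.level from Subtype.ext (hy.trans hx.symm), symmDiff_right_comm,
    symmDiff_left_inj]

theorem IsTreeLevel.isProj_translateFun (hT : IsTreeLevel lvl) {t : T} {x y : Elem b₀} :
    IsProj t (translateFun hτ x) (translateFun hτ y) ↔ IsProj t x y := by
  simp only [IsProj, translateFun, level_of, val_of]
  refine and_congr_right fun hx => and_congr_right fun hy => ?_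
  have hyx : y.level ≤ x.level := Subtype.coe_le_coe.1 (hy ▸ hx)
  rw [hT.proj_symmDiff, ← hy, hτ.proj_eq hyx, symmDiff_left_inj]

def IsTreeLevel.translate (hT : IsTreeLevel lvl) : Elem b₀ ≃[language.{u, v} T] Elem b₀ where
  toFun := translateFun hτ
  invFun := translateFun hτ
  left_inv := translateFun_translateFun hτ
  right_inv := translateFun_translateFun hτ
  map_fun' f := isEmptyElim f
  map_rel' := by
    rintro _ (t | t) xs
    exacts [isToggle_translateFun hτ, hT.isProj_translateFun hτ]

end Translations

def IsTreeLevel.autEquiv (hT : IsTreeLevel lvl) (b₀ : Branch lvl) :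
    (Elem b₀ ≃[language.{u, v} T] Elem b₀) ≃ CoherentSeq lvl where
  toFun g := ⟨autSeq g, isCoherent_autSeq g⟩
  invFun τ := hT.translate τ.2
  left_inv g := FirstOrder.Language.Equiv.ext fun x => by
    change translateFun (isCoherent_autSeq g) x = g x
    exact ext_level (level_of.trans (level_map g x).symm) (val_map g x).symm
  right_inv τ := Subtype.ext <| funext fun α => by
    change (∅ : Finset T) ∆ τ.1 (zero b₀ α).level = τ.1 α
    rw [zero, level_of]
    exact bot_symmDiff _

theorem mk_elem (hheight : ∀ t, lvl t < om1)
    (hlevcard : ∀ α : Ordinal, #{t : T // lvl t = α} ≤ aleph 1) (b₀ : Branch lvl) :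
    #(Elem b₀) = aleph 1 := by
  have : Infinite O1 := by
    rw [infinite_iff, mk_O1, ← lift_aleph0.{1, 0}, lift_le]
    exact aleph0_le_aleph 1
  have : Infinite T := Infinite.of_injective b₀.1 b₀.2.1.injective
  refine le_antisymm ?_ ?_
  · calc #(Elem b₀) ≤ #(T × Finset T) :=
          mk_le_of_injective (f := fun x => (x.base, x.val)) fun x y h =>
            Elem.ext (congrArg Prod.fst h) (congrArg Prod.snd h)
      _ = #T := by
          rw [mk_prod, lift_id, lift_id, mk_finset_of_infinite, mul_eq_self (aleph0_le_mk T)]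
      _ ≤ aleph 1 := mk_le_aleph_one hheight hlevcard
  · have h := lift_mk_le'.2
      ⟨⟨zero b₀, fun α β h => by simpa [zero] using congrArg Elem.level h⟩⟩
    rwa [mk_O1, lift_uzero, lift_le] at h

end Model

end TreeModel

open TreeModel in
theorem structure_with_lambda_automorphisms_general
    (T : Type) [PartialOrder T] (lvl : T → Ordinal)
    (hmono : StrictMono lvl)
    (htree : ∀ x y z : T, x < z → y < z → x ≤ y ∨ y ≤ x)
    (hheight : ∀ t, lvl t < om1)
    (hlevcard : ∀ α : Ordinal, #{t : T // lvl t = α} ≤ Cardinal.aleph 1)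
    (lam : Cardinal.{0}) (h1 : Cardinal.aleph 1 < lam)
    (hbranch :
      #{b : O1 → T // StrictMono b ∧ ∀ α : O1, lvl (b α) = (α : Ordinal)} =
        Cardinal.lift.{1} lam) :
    ∃ (L : FirstOrder.Language) (M : Type) (_ : L.Structure M),
      L.IsRelational ∧ #M = Cardinal.aleph 1 ∧ #(M ≃[L] M) = lam := by
  have hT : IsTreeLevel lvl := ⟨hmono, htree⟩
  have hB : #(Branch lvl) = lift.{1} lam := hbranch
  have : Infinite (Branch lvl) := by
    rw [infinite_iff, hB, ← lift_aleph0.{1, 0}, lift_le]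
    exact (aleph0_le_aleph 1).trans h1.le
  obtain ⟨b₀⟩ : Nonempty (Branch lvl) := inferInstance
  refine ⟨language T, Elem b₀, inferInstance, inferInstance, mk_elem hheight hlevcard b₀, ?_⟩
  have h := lift_mk_eq'.2 ⟨hT.autEquiv b₀⟩
  rw [lift_uzero, mk_coherentSeq hT, hB] at h
  exact lift_inj.1 h

/-- Suppose `T` is a tree of height ω₁ (partial order with linearly ordered sets of
predecessors and a strictly monotone level function `lvl` taking values `< ω₁`), all of
whose levels have at most ω₁ nodes, and `T` has exactly `λ` branches of length ω₁
(strictly increasing selections of one node from each level), where `ω₁ < λ < 2^ω₁`.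
Then there is a first-order structure `M` in a relational vocabulary, of cardinality
ω₁, whose automorphism group has cardinality exactly `λ`. -/
theorem structure_with_lambda_automorphisms
    (T : Type) [PartialOrder T] (lvl : T → Ordinal)
    (hmono : StrictMono lvl)
    (htree : ∀ x y z : T, x < z → y < z → x ≤ y ∨ y ≤ x)
    (hheight : ∀ t, lvl t < om1)
    (hlevels : ∀ α < om1, ∃ t, lvl t = α)
    (hlevcard : ∀ α : Ordinal, #{t : T // lvl t = α} ≤ Cardinal.aleph 1)
    (lam : Cardinal.{0}) (h1 : Cardinal.aleph 1 < lam) (h2 : lam < 2 ^ Cardinal.aleph 1)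
    (hbranch :
      #{b : O1 → T // StrictMono b ∧ ∀ α : O1, lvl (b α) = (α : Ordinal)} =
        Cardinal.lift.{1} lam) :
    ∃ (L : FirstOrder.Language) (M : Type) (_ : L.Structure M),
      L.IsRelational ∧ #M = Cardinal.aleph 1 ∧ #(M ≃[L] M) = lam :=
  structure_with_lambda_automorphisms_general T lvl hmono htree hheight hlevcard lam h1 hbranch

end
end

section
/- Assume CH. If M is a structure of cardinality ω₁ in a relational vocabulary with exactly λ automorphisms where ω₁ < λ < 2^{ω₁}, then there exists a tree T of height ω₁, with at most ω₁ nodes on each level, having exactly λ branches of length ω₁. -/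
/-!
Enumerate `M` in order type `ω₁` and let level `i` of the tree consist of the restrictions of
automorphisms of `M`, together with their inverses, to the first `i` elements. An automorphism
restricts to a branch through all levels. Conversely, the union of such a branch is a bijection
(this is what the recorded inverses are for), and it preserves each relation, because a tuple
lies in some initial segment, where the branch agrees with an automorphism; as the vocabulary is
relational, it is an automorphism. A node is determined by a map from a countable set to
`M × M`, so under CH each level has at most `ℵ₁ ^ ℵ₀ = ℵ₁` nodes.
-/

open Cardinal FirstOrder

noncomputable section

universe u

theorem Cardinal.aleph_one_power_le_of_CH (hCH : (2 : Cardinal.{u}) ^ ℵ₀ = ℵ₁) {κ : Cardinal.{u}}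
    (hκ : κ ≤ ℵ₀) : ℵ₁ ^ κ ≤ ℵ₁ :=
  calc ℵ₁ ^ κ ≤ ℵ₁ ^ ℵ₀ := power_le_power_left (aleph_pos 1).ne' hκ
    _ = ℵ₁ := by rw [← hCH, ← power_mul, aleph0_mul_aleph0]

theorem Cardinal.mk_Iio_toType_aleph_one_le (i : (ℵ₁ : Cardinal.{u}).ord.ToType) :
    #(Set.Iio i) ≤ ℵ₀ :=
  lt_aleph_one_iff.1 (by simpa using mk_Iio_lt i)

namespace FirstOrder.Language

variable {L : Language} {M : Type*} [L.Structure M] {ι : Type*} [LinearOrder ι] {r : M → ι}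

def truncate (r : M → ι) (f : M → M) (i : ι) (a : M) : M := if r a < i then f a else a

/-- Level `i` consists of the restrictions to `{a | r a < i}` of automorphisms of `M`, each
recorded together with the restriction of its inverse. Restricting only global automorphisms
(rather than taking all automorphisms of the substructures) leaves the full branches unchanged. -/
@[ext]
structure AutTree (L : Language) [L.Structure M] (r : M → ι) where
  level : ι
  fwd : M → M
  bwd : M → M
  exists_aut : ∃ σ : M ≃[L] M, fwd = truncate r σ level ∧ bwd = truncate r σ.symm level

namespace AutTree

def AgreeBelow (i : ι) (s t : AutTree L r) : Prop :=
  ∀ a, r a < i → s.fwd a = t.fwd a ∧ s.bwd a = t.bwd a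

namespace AgreeBelow

variable {i j : ι} {s t u : AutTree L r}

theorem refl (i : ι) (s : AutTree L r) : AgreeBelow i s s := fun _ _ => ⟨rfl, rfl⟩

theorem symm (h : AgreeBelow i s t) : AgreeBelow i t s :=
  fun a ha => ⟨(h a ha).1.symm, (h a ha).2.symm⟩

theorem trans (hst : AgreeBelow i s t) (htu : AgreeBelow i t u) : AgreeBelow i s u :=
  fun a ha => ⟨(hst a ha).1.trans (htu a ha).1, (hst a ha).2.trans (htu a ha).2⟩

theorem mono (h : AgreeBelow j s t) (hij : i ≤ j) : AgreeBelow i s t :=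
  fun a ha => h a (ha.trans_le hij)

end AgreeBelow

theorem exists_aut_agree (t : AutTree L r) :
    ∃ σ : M ≃[L] M, ∀ a, r a < t.level → t.fwd a = σ a ∧ t.bwd a = σ.symm a := by
  obtain ⟨σ, hf, hb⟩ := t.exists_aut
  exact ⟨σ, fun a ha => by simp [hf, hb, truncate, ha]⟩

theorem apply_of_not_lt (t : AutTree L r) {a : M} (ha : ¬r a < t.level) :
    t.fwd a = a ∧ t.bwd a = a := by
  obtain ⟨σ, hf, hb⟩ := t.exists_aut
  simp [hf, hb, truncate, ha]

theorem eq_of_agreeBelow {s t : AutTree L r} (hl : s.level = t.level)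
    (h : AgreeBelow s.level s t) : s = t := by
  have key : ∀ a, s.fwd a = t.fwd a ∧ s.bwd a = t.bwd a := fun a => by
    by_cases ha : r a < s.level
    · exact h a ha
    · have hs := s.apply_of_not_lt ha
      have ht := t.apply_of_not_lt (hl ▸ ha)
      exact ⟨hs.1.trans ht.1.symm, hs.2.trans ht.2.symm⟩
  exact AutTree.ext hl (funext fun a => (key a).1) (funext fun a => (key a).2)

instance : LT (AutTree L r) := ⟨fun s t => s.level < t.level ∧ AgreeBelow s.level s t⟩

instance : IsStrictOrder (AutTree L r) (· < ·) where
  irrefl _ h := lt_irrefl _ h.1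
  trans _ _ _ hst htu := ⟨hst.1.trans htu.1, hst.2.trans (htu.2.mono hst.1.le)⟩

theorem eq_or_lt_or_lt_of_lt {s t u : AutTree L r} (hs : s < u) (ht : t < u) :
    s = t ∨ s < t ∨ t < s := by
  rcases lt_trichotomy s.level t.level with h | h | h
  · exact Or.inr (Or.inl ⟨h, hs.2.trans (ht.2.mono h.le).symm⟩)
  · exact Or.inl (eq_of_agreeBelow h (hs.2.trans (ht.2.mono h.le).symm))
  · exact Or.inr (Or.inr ⟨h, ht.2.trans (hs.2.mono h.le).symm⟩)

def ofAut (σ : M ≃[L] M) (i : ι) : AutTree L r :=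
  ⟨i, truncate r σ i, truncate r σ.symm i, σ, rfl, rfl⟩

@[simp] theorem level_ofAut (σ : M ≃[L] M) (i : ι) : (ofAut σ i : AutTree L r).level = i := rfl

theorem ofAut_apply (σ : M ≃[L] M) {i : ι} {a : M} (ha : r a < i) :
    (ofAut σ i : AutTree L r).fwd a = σ a ∧ (ofAut σ i : AutTree L r).bwd a = σ.symm a := by
  simp [ofAut, truncate, ha]

theorem ofAut_lt_ofAut (σ : M ≃[L] M) {i j : ι} (hij : i < j) :
    (ofAut σ i : AutTree L r) < ofAut σ j :=
  ⟨hij, fun a (ha : r a < i) => by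
    have hi := ofAut_apply (r := r) σ ha
    have hj := ofAut_apply (r := r) σ (ha.trans hij)
    exact ⟨hi.1.trans hj.1.symm, hi.2.trans hj.2.symm⟩⟩

def IsBranch (b : ι → AutTree L r) : Prop := (∀ i j, i < j → b i < b j) ∧ ∀ i, (b i).level = i

theorem isBranch_ofAut (σ : M ≃[L] M) : IsBranch fun i => (ofAut σ i : AutTree L r) :=
  ⟨fun _ _ => ofAut_lt_ofAut σ, level_ofAut σ⟩

theorem isBranch_comp_symm_iff {κ : Type*} [LinearOrder κ] (φ : κ ≃o ι) {b : κ → AutTree L r} :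
    IsBranch (b ∘ φ.symm) ↔ (∀ i j, i < j → b i < b j) ∧ ∀ k, (b k).level = φ k := by
  simp only [IsBranch, Function.comp_apply, φ.surjective.forall, φ.lt_iff_lt,
    OrderIso.symm_apply_apply]

def levelEmbedding (i : ι) : {t : AutTree L r // t.level = i} ↪ ({a : M // r a < i} → M × M) where
  toFun t a := (t.1.fwd a, t.1.bwd a)
  inj' s t hst := Subtype.ext <| eq_of_agreeBelow (s.2.trans t.2.symm) fun a ha =>
    Prod.ext_iff.1 (congrFun hst ⟨a, s.2 ▸ ha⟩)

namespace IsBranch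

variable {b : ι → AutTree L r}

theorem agreeBelow_min (hb : IsBranch b) (i j : ι) : AgreeBelow (min i j) (b i) (b j) := by
  rcases lt_trichotomy i j with h | rfl | h
  · simpa [min_eq_left h.le, hb.2 i] using (hb.1 i j h).2
  · exact .refl _ _
  · simpa [min_eq_right h.le, hb.2 j] using (hb.1 j i h).2.symm

variable [NoMaxOrder ι]

def limFwd (b : ι → AutTree L r) (a : M) : M := (b (exists_gt (r a)).choose).fwd a

def limBwd (b : ι → AutTree L r) (a : M) : M := (b (exists_gt (r a)).choose).bwd a

theorem lim_eq (hb : IsBranch b) {a : M} {i : ι} (ha : r a < i) :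
    limFwd b a = (b i).fwd a ∧ limBwd b a = (b i).bwd a :=
  hb.agreeBelow_min _ i a (lt_min (exists_gt (r a)).choose_spec ha)

theorem exists_aut_eqOn (hb : IsBranch b) {s : Set M} (hs : s.Finite) :
    ∃ σ : M ≃[L] M, ∀ a ∈ s, limFwd b a = σ a ∧ limBwd b a = σ.symm a := by
  rcases s.eq_empty_or_nonempty with rfl | ⟨a₀, -⟩
  · exact ⟨.refl L M, by simp⟩
  have : Nonempty ι := ⟨r a₀⟩
  obtain ⟨j, hj⟩ := (hs.image r).bddAbove
  obtain ⟨i, hji⟩ := exists_gt j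
  obtain ⟨σ, hσ⟩ := (b i).exists_aut_agree
  refine ⟨σ, fun a ha => ?_⟩
  have hai : r a < i := (hj (Set.mem_image_of_mem r ha)).trans_lt hji
  have hlim := hb.lim_eq hai
  have hnode := hσ a (by rwa [hb.2 i])
  exact ⟨hlim.1.trans hnode.1, hlim.2.trans hnode.2⟩

variable [L.IsRelational]

def glue (hb : IsBranch b) : M ≃[L] M where
  toFun := limFwd b
  invFun := limBwd b
  left_inv a := by
    obtain ⟨σ, hσ⟩ := hb.exists_aut_eqOn (Set.toFinite {a, limFwd b a})
    rw [(hσ _ (by simp)).2, (hσ a (by simp)).1, σ.symm_apply_apply]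
  right_inv a := by
    obtain ⟨σ, hσ⟩ := hb.exists_aut_eqOn (Set.toFinite {a, limBwd b a})
    rw [(hσ _ (by simp)).1, (hσ a (by simp)).2, σ.apply_symm_apply]
  map_fun' f := isEmptyElim f
  map_rel' {n} R x := by
    obtain ⟨σ, hσ⟩ := hb.exists_aut_eqOn (Set.finite_range x)
    have hx : limFwd b ∘ x = σ ∘ x := funext fun k => (hσ (x k) (by simp)).1
    simp only [hx]
    exact σ.map_rel R x

theorem glue_apply (hb : IsBranch b) (a : M) : hb.glue a = limFwd b a := rfl

theorem glue_symm_apply (hb : IsBranch b) (a : M) : hb.glue.symm a = limBwd b a := rfl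

end IsBranch

variable [NoMaxOrder ι] [L.IsRelational]

def branchEquiv : (M ≃[L] M) ≃ {b : ι → AutTree L r // IsBranch b} where
  toFun σ := ⟨fun i => ofAut σ i, isBranch_ofAut σ⟩
  invFun b := b.2.glue
  left_inv σ := by
    ext a
    obtain ⟨i, hi⟩ := exists_gt (r a)
    rw [IsBranch.glue_apply, (IsBranch.lim_eq (isBranch_ofAut σ) hi).1, (ofAut_apply σ hi).1]
  right_inv := fun ⟨b, hb⟩ => Subtype.ext <| funext fun i =>
    eq_of_agreeBelow (hb.2 i).symm fun a (ha : r a < i) => by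
      rw [(ofAut_apply _ ha).1, (ofAut_apply _ ha).2, hb.glue_apply, hb.glue_symm_apply]
      exact hb.lim_eq ha

end AutTree

end FirstOrder.Language

theorem FirstOrder.Language.AutTree.mk_level_le_aleph_one {L : Language} {M : Type u}
    [L.Structure M] (hCH : (2 : Cardinal.{u}) ^ ℵ₀ = ℵ₁) (hM : #M = ℵ₁)
    (e : M ≃ (ℵ₁ : Cardinal.{u}).ord.ToType)
    (i : (ℵ₁ : Cardinal.{u}).ord.ToType) : #{t : AutTree L e // t.level = i} ≤ ℵ₁ :=
  calc #{t : AutTree L e // t.level = i}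
      ≤ #({a : M // e a < i} → M × M) := mk_le_of_injective (levelEmbedding i).injective
    _ = ℵ₁ ^ #{a : M // e a < i} := by
      rw [← power_def, mk_prod, hM, lift_id, mul_eq_self (aleph0_le_aleph 1)]
    _ ≤ ℵ₁ := aleph_one_power_le_of_CH hCH <|
      (mk_congr (e.subtypeEquiv fun _ => Iff.rfl)).trans_le (mk_Iio_toType_aleph_one_le i)

open FirstOrder.Language AutTree

theorem tree_of_structure_with_lambda_automorphisms_general
    (hCH : (2 : Cardinal.{0}) ^ Cardinal.aleph0 = Cardinal.aleph 1)
    (L : FirstOrder.Language) [L.IsRelational] (M : Type) [L.Structure M]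
    (hM : #M = Cardinal.aleph 1)
    (lam : Cardinal.{0})
    (haut : #(M ≃[L] M) = lam) :
    ∃ (T : Type) (lt : T → T → Prop) (lvl : T → Ordinal),
      IsStrictOrder T lt ∧
      (∀ x y, lt x y → lvl x < lvl y) ∧
      (∀ x y z, lt x z → lt y z → x = y ∨ lt x y ∨ lt y x) ∧
      (∀ t, lvl t < om1) ∧
      (∀ α < om1, ∃ t, lvl t = α) ∧
      (∀ α : Ordinal, #{t : T // lvl t = α} ≤ Cardinal.aleph 1) ∧
      #{b : O1 → T // (∀ i j : O1, i < j → lt (b i) (b j)) ∧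
          ∀ α : O1, lvl (b α) = (α : Ordinal)} = Cardinal.lift.{1} lam := by
  obtain ⟨e⟩ : Nonempty (M ≃ om1.ToType) := Cardinal.eq.1 (by simp [hM])
  have : NoMaxOrder om1.{0}.ToType := Cardinal.noMaxOrder (aleph0_le_aleph 1)
  let iso : O1 ≃o om1.ToType := Ordinal.ToType.mk
  let lvl (t : AutTree L e) : Ordinal := iso.symm t.level
  have lvl_eq_iff {t : AutTree L e} {α : O1} : lvl t = α ↔ t.level = iso α := by
    rw [Subtype.coe_inj, OrderIso.symm_apply_eq]
  refine ⟨AutTree L e, (· < ·), lvl, inferInstance, fun s t h => iso.symm.strictMono h.1,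
    fun _ _ _ => eq_or_lt_or_lt_of_lt, fun t => (iso.symm t.level).2,
    fun α hα => ⟨ofAut (.refl L M) (iso ⟨α, hα⟩), (lvl_eq_iff (α := ⟨α, hα⟩)).2 rfl⟩,
    fun α => ?_, ?_⟩
  · rcases lt_or_ge α om1 with hα | hα
    · exact (mk_subtype_mono fun t => (lvl_eq_iff (α := ⟨α, hα⟩)).1).trans
        (mk_level_le_aleph_one hCH hM e _)
    · have : IsEmpty {t // lvl t = α} :=
        ⟨fun t => hα.not_gt (t.2 ▸ show lvl t.1 < om1 from (iso.symm t.1.level).2)⟩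
      simp
  · rw [← haut, ← lift_uzero #{b // _}]
    refine mk_congr_lift (((iso.toEquiv.arrowCongr (.refl _)).subtypeEquiv fun b => ?_).trans
      branchEquiv.symm)
    simp only [lvl_eq_iff]
    exact (isBranch_comp_symm_iff iso).symm

/-- Assume CH.  If `M` is a structure of cardinality ω₁ in a relational vocabulary with
exactly `λ` automorphisms, where `ω₁ < λ < 2^ω₁`, then there is a tree of height ω₁
(given by a strict order together with a strictly monotone level function, predecessors
of a node being linearly ordered), with at most ω₁ nodes on each level and nonempty
levels for every `α < ω₁`, having exactly `λ` branches of length ω₁. -/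
theorem tree_of_structure_with_lambda_automorphisms
    (hCH : (2 : Cardinal.{0}) ^ Cardinal.aleph0 = Cardinal.aleph 1)
    (L : FirstOrder.Language) [L.IsRelational] (M : Type) [L.Structure M]
    (hM : #M = Cardinal.aleph 1)
    (lam : Cardinal.{0}) (h1 : Cardinal.aleph 1 < lam) (h2 : lam < 2 ^ Cardinal.aleph 1)
    (haut : #(M ≃[L] M) = lam) :
    ∃ (T : Type) (lt : T → T → Prop) (lvl : T → Ordinal),
      IsStrictOrder T lt ∧
      (∀ x y, lt x y → lvl x < lvl y) ∧
      (∀ x y z, lt x z → lt y z → x = y ∨ lt x y ∨ lt y x) ∧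
      (∀ t, lvl t < om1) ∧
      (∀ α < om1, ∃ t, lvl t = α) ∧
      (∀ α : Ordinal, #{t : T // lvl t = α} ≤ Cardinal.aleph 1) ∧
      #{b : O1 → T // (∀ i j : O1, i < j → lt (b i) (b j)) ∧
          ∀ α : O1, lvl (b α) = (α : Ordinal)} = Cardinal.lift.{1} lam :=
  tree_of_structure_with_lambda_automorphisms_general hCH L M hM lam haut

end
end

section
/- Let A be a structure of cardinality ω₁ such that Player ∃ has a winning strategy in the splitting game G(A) of length ω₁ (at each round ∀ names a point to enter the domain or range of the countable partial automorphism π, and ∃ must produce two contradictory extensions of π covering that point, of which ∀ selects one; ∃ wins by surviving ω₁ rounds). Then A has exactly 2^{ω₁} automorphisms. -/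
open Cardinal FirstOrder FirstOrder.Language

noncomputable section

/-- The domain of a set of ordered pairs. -/
def pdom {X Y : Type*} (p : Set (X × Y)) : Set X := {x | ∃ y, (x, y) ∈ p}

/-- The range of a set of ordered pairs. -/
def pran {X Y : Type*} (p : Set (X × Y)) : Set Y := {y | ∃ x, (x, y) ∈ p}

/-- A set of ordered pairs is a partial automorphism of the `L`-structure `M`:
it is functional and injective, preserves all relations in both directions, and is
compatible with all function symbols. -/
def IsPartialAuto (L : FirstOrder.Language) (M : Type*) [L.Structure M]
    (p : Set (M × M)) : Prop :=
  (∀ a b b', (a, b) ∈ p → (a, b') ∈ p → b = b') ∧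
  (∀ a a' b, (a, b) ∈ p → (a', b) ∈ p → a = a') ∧
  (∀ (n : ℕ) (R : L.Relations n) (xs ys : Fin n → M),
    (∀ i, (xs i, ys i) ∈ p) → (Structure.RelMap R xs ↔ Structure.RelMap R ys)) ∧
  (∀ (n : ℕ) (F : L.Functions n) (xs ys : Fin n → M),
    (∀ i, (xs i, ys i) ∈ p) →
      (∀ b, (Structure.funMap F xs, b) ∈ p → b = Structure.funMap F ys) ∧
      (∀ a, (a, Structure.funMap F ys) ∈ p → a = Structure.funMap F xs)) ∧
  True

/-- Player ∃ has a winning strategy in the splitting game `G(A)` of length ω₁ on the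
structure `M`: at round `α`, ∀ demands (via `m α : M ⊕ M`) that a point of `M` enter
the domain (`inl`) or the range (`inr`) of the countable partial automorphism built so
far, and ∃ must produce two contradictory countable partial automorphisms, each
extending all positions previously chosen by ∀ and covering the demanded point; ∀ then
selects one of the two via `c α : Bool`.  A strategy is a map `S` from the entire
sequences of ∀'s demands and choices to the offered pairs, which at round `α` may use
only the demands `m β` for `β ≤ α` and the choices `c β` for `β < α`;
it is winning if along every play all its offers at all rounds `< ω₁` are legal. -/
def ExistsWinsSplittingGame (L : FirstOrder.Language) (M : Type) [L.Structure M] :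
    Prop :=
  ∃ S : (Ordinal.{0} → M ⊕ M) → (Ordinal.{0} → Bool) → Ordinal.{0} → Set (M × M) × Set (M × M),
    (∀ m m' c c' α, (∀ β ≤ α, m β = m' β) → (∀ β < α, c β = c' β) →
      S m c α = S m' c' α) ∧
    ∀ (m : Ordinal.{0} → M ⊕ M) (c : Ordinal.{0} → Bool), ∀ α : Ordinal.{0}, α < om1 →
      IsPartialAuto L M (S m c α).1 ∧ IsPartialAuto L M (S m c α).2 ∧
      (S m c α).1.Countable ∧ (S m c α).2.Countable ∧
      (∀ β < α, (if c β then (S m c β).1 else (S m c β).2) ⊆ (S m c α).1 ∧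
                (if c β then (S m c β).1 else (S m c β).2) ⊆ (S m c α).2) ∧
      (match m α with
        | Sum.inl a => a ∈ pdom (S m c α).1 ∧ a ∈ pdom (S m c α).2
        | Sum.inr b => b ∈ pran (S m c α).1 ∧ b ∈ pran (S m c α).2) ∧
      (∃ x y y', (x, y) ∈ (S m c α).1 ∧ (x, y') ∈ (S m c α).2 ∧ y ≠ y')

/-!
Fix an enumeration of `M ⊕ M` in order type ω₁ for ∀'s demands. For every binary sequence of
length ω₁ let ∀ follow ∃'s winning strategy, choosing between the two offers according to the
sequence. The union of the chosen partial automorphisms is a directed union, hence a partial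
automorphism, and the enumeration makes it total and onto: an automorphism. Two sequences
first differ at some round, where they received the same offer but took the two contradictory
halves, so their automorphisms differ. This gives `2 ^ ℵ₁` automorphisms, and there are at most
`ℵ₁ ^ ℵ₁ = 2 ^ ℵ₁` maps `M → M`.
-/

theorem Directed.exists_forall_mem_of_fintype {α ι κ : Type*} [Nonempty ι] [Fintype κ]
    {P : ι → Set α} (hP : Directed (· ⊆ ·) P) {q : κ → α} (hq : ∀ k, q k ∈ ⋃ i, P i) :
    ∃ i, ∀ k, q k ∈ P i := by
  classical
  obtain ⟨i, hi⟩ := hP.exists_mem_subset_of_finset_subset_biUnion (s := Finset.univ.image q)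
    (by simpa [Set.subset_def] using hq)
  exact ⟨i, fun k => hi (by simp)⟩

theorem exists_injective_lt_ord (X : Type*) :
    ∃ e : X → Ordinal, Function.Injective e ∧ ∀ x, e x < (#X).ord := by
  obtain ⟨r, _, hr⟩ := Cardinal.exists_ord_eq X
  exact ⟨Ordinal.typein r, Ordinal.typein_injective r, fun x => hr ▸ Ordinal.typein_lt_type r x⟩

theorem exists_le_ne_forall_lt_eq {ι X : Type*} [LinearOrder ι] [WellFoundedLT ι]
    {f g : ι → X} {i : ι} (h : f i ≠ g i) :
    ∃ j ≤ i, f j ≠ g j ∧ ∀ k < j, f k = g k := by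
  obtain ⟨j, hj, hmin⟩ := wellFounded_lt.has_min {j | f j ≠ g j} ⟨i, h⟩
  exact ⟨j, not_lt.1 (hmin i h), hj, fun k hk => not_not.1 fun hne => hmin k hne hk⟩

section PartialAuto

variable {L : FirstOrder.Language} {M : Type*} [L.Structure M]

theorem isPartialAuto_iUnion {ι : Type*} [Nonempty ι] {P : ι → Set (M × M)}
    (hdir : Directed (· ⊆ ·) P) (hP : ∀ i, IsPartialAuto L M (P i)) :
    IsPartialAuto L M (⋃ i, P i) := by
  refine ⟨fun a b b' h h' => ?_, fun a a' b h h' => ?_, fun n R xs ys h => ?_,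
    fun n F xs ys h => ⟨fun b hb => ?_, fun a ha => ?_⟩, trivial⟩
  · obtain ⟨i, hi⟩ := hdir.exists_forall_mem_of_fintype (q := ![(a, b), (a, b')])
      (Fin.forall_fin_two.2 ⟨h, h'⟩)
    exact (hP i).1 a b b' (hi 0) (hi 1)
  · obtain ⟨i, hi⟩ := hdir.exists_forall_mem_of_fintype (q := ![(a, b), (a', b)])
      (Fin.forall_fin_two.2 ⟨h, h'⟩)
    exact (hP i).2.1 a a' b (hi 0) (hi 1)
  · obtain ⟨i, hi⟩ := hdir.exists_forall_mem_of_fintype h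
    exact (hP i).2.2.1 n R xs ys hi
  · obtain ⟨i, hi⟩ := hdir.exists_forall_mem_of_fintype
      (q := fun k : Option (Fin n) => k.elim (Structure.funMap F xs, b) fun k => (xs k, ys k))
      (by rintro (_ | k) <;> simp_all)
    exact ((hP i).2.2.2.1 n F xs ys fun k => hi (some k)).1 b (hi none)
  · obtain ⟨i, hi⟩ := hdir.exists_forall_mem_of_fintype
      (q := fun k : Option (Fin n) => k.elim (a, Structure.funMap F ys) fun k => (xs k, ys k))
      (by rintro (_ | k) <;> simp_all)
    exact ((hP i).2.2.2.1 n F xs ys fun k => hi (some k)).2 a (hi none)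

theorem IsPartialAuto.exists_equiv {p : Set (M × M)} (hp : IsPartialAuto L M p)
    (hdom : ∀ a, a ∈ pdom p) (hran : ∀ b, b ∈ pran p) :
    ∃ e : M ≃[L] M, ∀ x y, (x, y) ∈ p → e x = y := by
  choose f hf using hdom
  choose g hg using hran
  have hgf : Function.LeftInverse g f := fun a => hp.2.1 _ _ _ (hg (f a)) (hf a)
  have hfg : Function.RightInverse g f := fun b => hp.1 _ _ _ (hf (g b)) (hg b)
  refine ⟨⟨⟨f, g, hgf, hfg⟩, fun {n} F xs => ?_, fun {n} R xs => ?_⟩,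
    fun x y hxy => hp.1 _ _ _ (hf x) hxy⟩
  · exact (hp.2.2.2.1 n F xs (f ∘ xs) fun k => hf (xs k)).1 _ (hf _)
  · exact (hp.2.2.1 n R xs (f ∘ xs) fun k => hf (xs k)).symm

end PartialAuto

abbrev SplittingStrategy (M : Type) : Type 1 :=
  (Ordinal.{0} → M ⊕ M) → (Ordinal.{0} → Bool) → Ordinal.{0} → Set (M × M) × Set (M × M)

namespace SplittingStrategy

def DependsOnlyOnPast {M : Type} (S : SplittingStrategy M) : Prop :=
  ∀ m m' c c' α, (∀ β ≤ α, m β = m' β) → (∀ β < α, c β = c' β) → S m c α = S m' c' α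

def IsWinning (L : FirstOrder.Language) {M : Type} [L.Structure M]
    (S : SplittingStrategy M) : Prop :=
  ∀ (m : Ordinal.{0} → M ⊕ M) (c : Ordinal.{0} → Bool), ∀ α : Ordinal.{0}, α < om1 →
    IsPartialAuto L M (S m c α).1 ∧ IsPartialAuto L M (S m c α).2 ∧
    (S m c α).1.Countable ∧ (S m c α).2.Countable ∧
    (∀ β < α, (if c β then (S m c β).1 else (S m c β).2) ⊆ (S m c α).1 ∧
              (if c β then (S m c β).1 else (S m c β).2) ⊆ (S m c α).2) ∧
    (match m α with
      | Sum.inl a => a ∈ pdom (S m c α).1 ∧ a ∈ pdom (S m c α).2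
      | Sum.inr b => b ∈ pran (S m c α).1 ∧ b ∈ pran (S m c α).2) ∧
    (∃ x y y', (x, y) ∈ (S m c α).1 ∧ (x, y') ∈ (S m c α).2 ∧ y ≠ y')

variable {L : FirstOrder.Language} {M : Type} [L.Structure M]

def position (S : SplittingStrategy M) (m : Ordinal.{0} → M ⊕ M) (c : Ordinal.{0} → Bool)
    (α : Ordinal) : Set (M × M) :=
  if c α then (S m c α).1 else (S m c α).2

def playUnion (S : SplittingStrategy M) (m : Ordinal.{0} → M ⊕ M) (c : Ordinal.{0} → Bool) :
    Set (M × M) :=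
  ⋃ α : Set.Iio om1, S.position m c α

variable {S : SplittingStrategy M} {m : Ordinal.{0} → M ⊕ M} {c : Ordinal.{0} → Bool}

theorem position_subset_of_lt (hS : S.IsWinning L) {β α : Ordinal} (hβα : β < α)
    (hα : α < om1) : S.position m c β ⊆ S.position m c α := by
  obtain ⟨h₁, h₂⟩ := (hS m c α hα).2.2.2.2.1 β hβα
  show _ ⊆ if c α then (S m c α).1 else (S m c α).2
  split
  exacts [h₁, h₂]

theorem isPartialAuto_position (hS : S.IsWinning L) {α : Ordinal} (hα : α < om1) :
    IsPartialAuto L M (S.position m c α) := by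
  unfold position
  split
  exacts [(hS m c α hα).1, (hS m c α hα).2.1]

theorem isPartialAuto_playUnion (hS : S.IsWinning L) :
    IsPartialAuto L M (S.playUnion m c) := by
  have : Nonempty (Set.Iio om1) := ⟨⟨0, Cardinal.ord_pos.2 (Cardinal.aleph_pos 1)⟩⟩
  refine isPartialAuto_iUnion (Monotone.directed_le fun β α hβα => ?_)
    fun α => isPartialAuto_position hS α.2
  rcases hβα.lt_or_eq with hlt | rfl
  exacts [position_subset_of_lt hS hlt α.2, le_rfl]

theorem mem_pdom_playUnion (hS : S.IsWinning L) {α : Ordinal} (hα : α < om1) {a : M}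
    (hm : m α = .inl a) : a ∈ pdom (S.playUnion m c) := by
  have hcov := (hS m c α hα).2.2.2.2.2.1
  rw [hm] at hcov
  obtain ⟨b, hb⟩ : a ∈ pdom (S.position m c α) := by
    unfold position
    split
    exacts [hcov.1, hcov.2]
  exact ⟨b, Set.mem_iUnion.2 ⟨⟨α, hα⟩, hb⟩⟩

theorem mem_pran_playUnion (hS : S.IsWinning L) {α : Ordinal} (hα : α < om1) {b : M}
    (hm : m α = .inr b) : b ∈ pran (S.playUnion m c) := by
  have hcov := (hS m c α hα).2.2.2.2.2.1
  rw [hm] at hcov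
  obtain ⟨a, ha⟩ : b ∈ pran (S.position m c α) := by
    unfold position
    split
    exacts [hcov.1, hcov.2]
  exact ⟨a, Set.mem_iUnion.2 ⟨⟨α, hα⟩, ha⟩⟩

theorem exists_equiv_extending_playUnion (hS : S.IsWinning L) (hm : ∀ v, ∃ α < om1, m α = v) :
    ∃ e : M ≃[L] M, ∀ x y, (x, y) ∈ S.playUnion m c → e x = y :=
  (isPartialAuto_playUnion hS).exists_equiv
    (fun a => let ⟨_, hα, hma⟩ := hm (.inl a); mem_pdom_playUnion hS hα hma)
    (fun b => let ⟨_, hα, hmb⟩ := hm (.inr b); mem_pran_playUnion hS hα hmb)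

theorem exists_ne_of_diverge (hS : S.IsWinning L) {c' : Ordinal.{0} → Bool}
    {β : Ordinal} (hβ : β < om1) (hoffer : S m c β = S m c' β) (hne : c β ≠ c' β) :
    ∃ x y y', (x, y) ∈ S.playUnion m c ∧ (x, y') ∈ S.playUnion m c' ∧ y ≠ y' := by
  obtain ⟨x, y, y', hy, hy', hyy'⟩ := (hS m c β hβ).2.2.2.2.2.2
  have mem_playUnion {c} {p : M × M} (hp : p ∈ S.position m c β) : p ∈ S.playUnion m c :=
    Set.mem_iUnion.2 ⟨⟨β, hβ⟩, hp⟩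
  cases hc : c β <;> cases hc' : c' β <;> simp only [hc, hc', ne_eq, not_true] at hne
  · exact ⟨x, y', y, mem_playUnion (by simp [position, hc, hy']),
      mem_playUnion (by simp [position, hc', ← hoffer, hy]), hyy'.symm⟩
  · exact ⟨x, y, y', mem_playUnion (by simp [position, hc, hy]),
      mem_playUnion (by simp [position, hc', ← hoffer, hy']), hyy'⟩

theorem exists_injective_equiv (hcoh : S.DependsOnlyOnPast) (hS : S.IsWinning L)
    (hm : ∀ v, ∃ α < om1, m α = v) {T : Type*} (c : T → Ordinal.{0} → Bool)
    (hc : ∀ t t', t ≠ t' → ∃ α < om1, c t α ≠ c t' α) :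
    ∃ Φ : T → M ≃[L] M, Function.Injective Φ := by
  choose Φ hΦ using fun t => exists_equiv_extending_playUnion (c := c t) hS hm
  refine ⟨Φ, fun t t' hΦt => by_contra fun htt' => ?_⟩
  obtain ⟨α, hα, hne⟩ := hc t t' htt'
  obtain ⟨β, hβα, hβ, hagree⟩ := exists_le_ne_forall_lt_eq hne
  obtain ⟨x, y, y', hy, hy', hyy'⟩ := exists_ne_of_diverge hS (hβα.trans_lt hα)
    (hcoh m m _ _ β (fun _ _ => rfl) hagree) hβ
  exact hyy' (by rw [← hΦ t x y hy, ← hΦ t' x y' hy', hΦt])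

end SplittingStrategy

/-- If `A` is a structure of cardinality ω₁ and Player ∃ has a winning strategy in the
splitting game `G(A)` of length ω₁ (i.e. `A` is perfect), then `A` has exactly `2^ω₁`
automorphisms. -/
theorem perfect_implies_two_omega1_automorphisms
    (L : FirstOrder.Language) (M : Type) [L.Structure M]
    (hM : #M = Cardinal.aleph 1)
    (hwin : ExistsWinsSplittingGame L M) :
    #(M ≃[L] M) = 2 ^ Cardinal.aleph 1 := by
  obtain ⟨S, hcoh, hS⟩ := hwin
  have hMM : #(M ⊕ M) = ℵ₁ := by
    simp [hM, Cardinal.add_eq_self (Cardinal.aleph0_le_aleph 1)]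
  have : Nonempty M := Cardinal.mk_ne_zero_iff.1 (hM ▸ (Cardinal.aleph_pos 1).ne')
  obtain ⟨e, he, he_lt⟩ := exists_injective_lt_ord (M ⊕ M)
  rw [hMM] at he_lt
  -- ∀ enumerates `M ⊕ M` at the rounds `e v`, and a choice function `f` is played as `f (m α)`.
  set m := Function.invFun e
  have hm : ∀ v, ∃ α < om1, m α = v := fun v => ⟨e v, he_lt v, Function.leftInverse_invFun he v⟩
  obtain ⟨Φ, hΦ⟩ := SplittingStrategy.exists_injective_equiv hcoh hS hm
    (fun f : M ⊕ M → Bool => f ∘ m) fun f f' hff' => by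
      obtain ⟨v, hv⟩ := Function.ne_iff.1 hff'
      exact ⟨e v, he_lt v, by simpa [m, Function.leftInverse_invFun he v] using hv⟩
  refine le_antisymm ?_ ?_
  · calc #(M ≃[L] M) ≤ #(M → M) := Cardinal.mk_le_of_injective DFunLike.coe_injective
      _ = 2 ^ ℵ₁ := by
        rw [Cardinal.mk_arrow, Cardinal.lift_id, hM,
          Cardinal.power_self_eq (Cardinal.aleph0_le_aleph 1)]
  · calc 2 ^ ℵ₁ = #(M ⊕ M → Bool) := by simp [hMM]
      _ ≤ #(M ≃[L] M) := Cardinal.mk_le_of_injective hΦ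

end
end
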